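/- arXiv:2312.06390 — 8 statements merged into one kernel-verified Lean document; each statement's English description precedes it below -/
import Mathlib

section
/- (Theorem 5.1.) Fix p > 1 and let (N,D) lie in Sector II, i.e., −N ≥ D > 0 > N > −1. Then MQ_{(N,−D)} ⊆ MQ_{(N,D)}: for every (M,P) in the open square (−1,1)×(−1,1), if (N,−D) ≫ (M,P) then (N,D) ≫ (M,P). -/
open MeasureTheory

/-- The geometrically regular weight sequence `α_n(N,D) = √((pⁿ+N)/(pⁿ+D))`. -/
noncomputable def grws (p N D : ℝ) (n : ℕ) : ℝ :=
  Real.sqrt ((p ^ n + N) / (p ^ n + D))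

/-- Moments of a weight sequence: `γ_0 = 1`, `γ_n = ∏_{j<n} w_j²`. -/
noncomputable def moments (w : ℕ → ℝ) (n : ℕ) : ℝ :=
  ∏ j ∈ Finset.range n, (w j) ^ 2

/-- A bounded sequence of positive reals is a subnormal weight sequence if its
moment sequence is represented by a compactly supported Berger measure on `[0,∞)`. -/
def IsSubnormalWeight (w : ℕ → ℝ) : Prop :=
  (∀ n, 0 < w n) ∧ (∃ C : ℝ, ∀ n, w n ≤ C) ∧
  ∃ μ : Measure ℝ, IsFiniteMeasure μ ∧
    (∃ K : Set ℝ, IsCompact K ∧ K ⊆ Set.Ici (0 : ℝ) ∧ μ Kᶜ = 0) ∧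
    ∀ n : ℕ, moments w n = ∫ x, x ^ n ∂μ

/-- Moment infinitely divisible weight sequence: every positive real power is subnormal. -/
def IsMIDWeight (w : ℕ → ℝ) : Prop :=
  ∀ s : ℝ, 0 < s → IsSubnormalWeight (fun n => (w n) ^ s)

/-- `(N,D) ≫_s (M,P)`: the quotient weight is subnormal. -/
def SubnormalSubord (p N D M P : ℝ) : Prop :=
  IsSubnormalWeight (fun n => grws p N D n / grws p M P n)

/-- `(N,D) ≫ (M,P)`: the quotient weight is MID. -/
def MIDSubord (p N D M P : ℝ) : Prop :=
  IsMIDWeight (fun n => grws p N D n / grws p M P n)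

noncomputable def gr (p : ℝ) (k : ℕ) : ℝ := ((p : ℝ) ^ (2 * k + 1))⁻¹

noncomputable def gb (p D s : ℝ) (k : ℕ) : ℝ :=
  s * (2 * D ^ (2 * k + 1) / ((2 * k + 1) * (1 - gr p k)))

noncomputable def gh (p D s : ℝ) (n : ℕ) : ℝ := ∑' k, gb p D s k * gr p k ^ n

section core
variable {p D s : ℝ} (hp : 1 < p) (hD0 : 0 < D) (hD1 : D < 1) (hs : 0 < s)

include hp in
lemma gr_pos (k : ℕ) : 0 < gr p k := by
  have : (0:ℝ) < p := by linarith
  exact inv_pos.2 (pow_pos this _)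

include hp in
lemma gr_le (k : ℕ) : gr p k ≤ p⁻¹ := by
  have hp0 : (0:ℝ) < p := by linarith
  rw [gr, ← one_div, ← one_div, div_le_div_iff₀ (pow_pos hp0 _) hp0]
  calc (1:ℝ) * p = p ^ 1 := by ring
  _ ≤ p ^ (2 * k + 1) := pow_le_pow_right₀ hp.le (by omega)
  _ = 1 * p ^ (2 * k + 1) := by ring

include hp in
lemma gr_lt_one (k : ℕ) : gr p k < 1 :=
  lt_of_le_of_lt (gr_le hp k) (by rw [inv_lt_one_iff₀]; right; exact hp)

include hp hD0 hs in
lemma gb_nonneg (k : ℕ) : 0 ≤ gb p D s k := by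
  have h2 : (0:ℝ) < 1 - gr p k := by linarith [gr_lt_one hp k]
  have h1 : (0:ℝ) < 2 * (k:ℝ) + 1 := by positivity
  rw [gb]
  have := hD0
  have : (0:ℝ) ≤ 2 * D ^ (2 * k + 1) := by positivity
  have : (0:ℝ) ≤ (2 * (k:ℝ) + 1) * (1 - gr p k) := by positivity
  apply mul_nonneg hs.le (div_nonneg (by assumption) (by assumption))

include hp hD0 hD1 hs in
lemma gb_le (k : ℕ) : gb p D s k ≤ (2 * s * D / (1 - p⁻¹)) * (D ^ 2) ^ k := by
  have hq : (0:ℝ) < 1 - p⁻¹ := by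
    have := inv_lt_one_of_one_lt₀ hp
    have : (0:ℝ) < p⁻¹ := inv_pos.2 (by linarith)
    linarith [inv_lt_one_of_one_lt₀ hp]
  have h3 : (0:ℝ) < 1 - gr p k := by linarith [gr_lt_one hp k]
  have h5 : (1:ℝ) ≤ 2 * (k:ℝ) + 1 := by have : (0:ℝ) ≤ (k:ℝ) := Nat.cast_nonneg k; linarith
  have hden : 1 - p⁻¹ ≤ (2 * (k:ℝ) + 1) * (1 - gr p k) := by
    have h4 : (1:ℝ) - p⁻¹ ≤ 1 - gr p k := by linarith [gr_le hp k]
    calc (1:ℝ) - p⁻¹ ≤ 1 - gr p k := h4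
    _ = 1 * (1 - gr p k) := (one_mul _).symm
    _ ≤ (2 * (k:ℝ) + 1) * (1 - gr p k) := mul_le_mul_of_nonneg_right h5 h3.le
  have hnum : (0:ℝ) ≤ 2 * D ^ (2 * k + 1) := by positivity
  have step : 2 * D ^ (2 * k + 1) / ((2 * (k:ℝ) + 1) * (1 - gr p k))
      ≤ 2 * D ^ (2 * k + 1) / (1 - p⁻¹) := div_le_div_of_nonneg_left hnum hq hden
  have hD21 : D ^ (2 * k + 1) = (D ^ 2) ^ k * D := by
    rw [pow_add, pow_mul, pow_one]
  calc gb p D s k ≤ s * (2 * D ^ (2 * k + 1) / (1 - p⁻¹)) :=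
    mul_le_mul_of_nonneg_left step hs.le
  _ = (2 * s * D / (1 - p⁻¹)) * (D ^ 2) ^ k := by rw [hD21]; ring

include hp hD0 hD1 hs in
lemma gb_summable : Summable (gb p D s) :=
  Summable.of_nonneg_of_le (gb_nonneg hp hD0 hs) (gb_le hp hD0 hD1 hs)
    (Summable.mul_left _ (summable_geometric_of_lt_one (by positivity) (by nlinarith)))

include hp hD0 hD1 hs in
lemma gbr_summable (n : ℕ) : Summable (fun k => gb p D s k * gr p k ^ n) := by
  refine Summable.of_nonneg_of_le (fun k => ?_) (fun k => ?_) (gb_summable hp hD0 hD1 hs)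
  · have h1 := gb_nonneg hp hD0 hs k
    have h2 := (gr_pos hp k).le
    positivity
  · calc gb p D s k * gr p k ^ n ≤ gb p D s k * 1 :=
        mul_le_mul_of_nonneg_left
          (pow_le_one₀ (gr_pos hp k).le (gr_lt_one hp k).le) (gb_nonneg hp hD0 hs k)
    _ = gb p D s k := mul_one _

end core

noncomputable def gc (p D : ℝ) (k : ℕ) : ℝ := 2 * D ^ (2 * k + 1) / (2 * (k:ℝ) + 1)

section core2
variable {p D s : ℝ} (hp : 1 < p) (hD0 : 0 < D) (hD1 : D < 1) (hs : 0 < s)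

include hp in
lemma gb_eq (k : ℕ) : gb p D s k = s * gc p D k / (1 - gr p k) := by
  have h3 : (1:ℝ) - gr p k ≠ 0 := by
    have := gr_lt_one hp k; intro h; linarith [this, h]
  have h5 : (2 * (k:ℝ) + 1) ≠ 0 := by positivity
  rw [gb, gc]
  field_simp

include hp hD0 hD1 in
lemma log_series (j : ℕ) :
    HasSum (fun k : ℕ => gc p D k * gr p k ^ j)
      (-Real.log ((p ^ j - D) / (p ^ j + D))) := by
  have hp0 : (0:ℝ) < p := by linarith
  set x : ℝ := p ^ j with hxdef
  have hx1 : (1:ℝ) ≤ x := one_le_pow₀ hp.le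
  have hx0 : (0:ℝ) < x := by linarith
  set u : ℝ := D / x with hudef
  have hu0 : 0 < u := div_pos hD0 hx0
  have hu1 : u < 1 := by
    rw [hudef, div_lt_one hx0]; linarith
  have habs : |u| < 1 := by rw [abs_of_pos hu0]; exact hu1
  have habs' : |(-u)| < 1 := by rwa [abs_neg]
  have h1 := Real.hasSum_pow_div_log_of_abs_lt_one habs
  have h2 := Real.hasSum_pow_div_log_of_abs_lt_one habs'
  rw [show (1:ℝ) - -u = 1 + u by ring] at h2
  have h3 := h1.sub h2
  have hval : -Real.log (1 - u) - -Real.log (1 + u)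
      = -Real.log ((x - D) / (x + D)) := by
    have e1 : (x - D) / (x + D) = (1 - u) / (1 + u) := by
      rw [hudef]
      field_simp
    rw [e1, Real.log_div (by linarith) (by linarith)]
    ring
  rw [hval] at h3
  -- reindex over even indices
  have he : Function.Injective (fun k : ℕ => 2 * k) := fun a b h => by
    simp only at h; omega
  have hzero : ∀ m ∉ Set.range (fun k : ℕ => 2 * k),
      u ^ (m + 1) / (m + 1) - (-u) ^ (m + 1) / (m + 1) = (0:ℝ) := by
    intro m hm
    have hodd : Odd m := by
      rcases Nat.even_or_odd m with he' | ho
      · obtain ⟨t, rfl⟩ := he'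
        exact absurd ⟨t, by simp only; omega⟩ hm
      · exact ho
    have : Even (m + 1) := by
      rcases hodd with ⟨t, rfl⟩; exact ⟨t + 1, by ring⟩
    rw [this.neg_pow]
    ring
  have h4 := (Function.Injective.hasSum_iff he hzero).2 h3
  have hfe : (fun k : ℕ => gc p D k * gr p k ^ j)
      = (fun m : ℕ => u ^ (m + 1) / (m + 1) - (-u) ^ (m + 1) / (m + 1))
        ∘ (fun k : ℕ => 2 * k) := by
    funext k
    simp only [Function.comp]
    have hodd : Odd (2 * k + 1) := ⟨k, by ring⟩
    rw [hodd.neg_pow]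
    have hxpow : x ^ (2 * k + 1) = (p ^ (2 * k + 1)) ^ j := by
      rw [hxdef, ← pow_mul, ← pow_mul, Nat.mul_comm]
    have hgr : gr p k ^ j = (x ^ (2 * k + 1))⁻¹ := by
      rw [gr, inv_pow, hxpow]
    have hu : u ^ (2 * k + 1) = D ^ (2 * k + 1) * gr p k ^ j := by
      rw [hudef, div_pow, hgr, div_eq_mul_inv]
    rw [gc, hu]
    push_cast
    ring
  rw [hfe]
  exact h4

end core2

section core3
variable {p D s : ℝ} (hp : 1 < p) (hD0 : 0 < D) (hD1 : D < 1) (hs : 0 < s)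

include hp hD0 hD1 hs in
lemma gh_diff (n : ℕ) :
    gh p D s n - gh p D s 0
      = s * ∑ j ∈ Finset.range n, Real.log ((p ^ j - D) / (p ^ j + D)) := by
  have hls : ∀ j : ℕ, HasSum (fun k : ℕ => gc p D k * gr p k ^ j)
      (-Real.log ((p ^ j - D) / (p ^ j + D))) := log_series hp hD0 hD1
  have hsum : ∑ j ∈ Finset.range n, Real.log ((p ^ j - D) / (p ^ j + D))
      = -∑' k : ℕ, gc p D k * ((gr p k ^ n - 1) / (gr p k - 1)) := by
    calc ∑ j ∈ Finset.range n, Real.log ((p ^ j - D) / (p ^ j + D))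
        = ∑ j ∈ Finset.range n, -∑' k : ℕ, gc p D k * gr p k ^ j := by
          refine Finset.sum_congr rfl fun j _ => ?_
          rw [(hls j).tsum_eq]
          ring
      _ = -∑ j ∈ Finset.range n, ∑' k : ℕ, gc p D k * gr p k ^ j := by
          rw [← Finset.sum_neg_distrib]
      _ = -∑' k : ℕ, ∑ j ∈ Finset.range n, gc p D k * gr p k ^ j := by
          rw [Summable.tsum_finsetSum (fun j _ => (hls j).summable)]
      _ = -∑' k : ℕ, gc p D k * ((gr p k ^ n - 1) / (gr p k - 1)) := by
          congr 1
          refine tsum_congr fun k => ?_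
          rw [← Finset.mul_sum, geom_sum_eq (ne_of_lt (gr_lt_one hp k))]
  rw [hsum]
  have h1 : Summable (fun k => gb p D s k * gr p k ^ n) := gbr_summable hp hD0 hD1 hs n
  have h0 : Summable (fun k => gb p D s k * gr p k ^ 0) := gbr_summable hp hD0 hD1 hs 0
  rw [gh, gh]
  rw [← Summable.tsum_sub h1 h0]
  rw [mul_neg]
  rw [← tsum_mul_left]
  rw [← tsum_neg]
  apply tsum_congr
  intro k
  have hlt := gr_lt_one hp k
  have hne : gr p k - 1 ≠ 0 := by intro h; rw [sub_eq_zero] at h; exact absurd h hlt.ne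
  have h5 : (2 * (k:ℝ) + 1) ≠ 0 := by positivity
  rw [gb_eq hp, pow_zero, mul_one, gc]
  have hne2 : (1:ℝ) - gr p k ≠ 0 := by intro h; apply hne; linarith [sub_eq_zero.mp h]
  field_simp
  ring

include hp hD0 hD1 hs in
lemma moments_eq (n : ℕ) :
    moments (fun m => Real.sqrt ((p ^ m - D) / (p ^ m + D)) ^ s) n
      = Real.exp (gh p D s n - gh p D s 0) := by
  have hp0 : (0:ℝ) < p := by linarith
  have ht : ∀ j : ℕ, 0 < (p ^ j - D) / (p ^ j + D) := fun j => by
    have h1 : (1:ℝ) ≤ p ^ j := one_le_pow₀ hp.le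
    apply div_pos <;> linarith
  rw [gh_diff hp hD0 hD1 hs]
  calc moments (fun m => Real.sqrt ((p ^ m - D) / (p ^ m + D)) ^ s) n
      = ∏ j ∈ Finset.range n, Real.exp (Real.log ((p ^ j - D) / (p ^ j + D)) * s) := by
        refine Finset.prod_congr rfl fun j _ => ?_
        set t := (p ^ j - D) / (p ^ j + D) with htd
        have h2 : Real.sqrt t ^ (2:ℕ) = t := Real.sq_sqrt (ht j).le
        calc (Real.sqrt t ^ s) ^ (2:ℕ)
            = (Real.sqrt t ^ s) ^ ((2:ℕ):ℝ) := (Real.rpow_natCast _ 2).symm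
          _ = Real.sqrt t ^ (s * ((2:ℕ):ℝ)) := (Real.rpow_mul (Real.sqrt_nonneg t) _ _).symm
          _ = Real.sqrt t ^ (((2:ℕ):ℝ) * s) := by rw [mul_comm]
          _ = (Real.sqrt t ^ ((2:ℕ):ℝ)) ^ s := Real.rpow_mul (Real.sqrt_nonneg t) _ _
          _ = t ^ s := by rw [Real.rpow_natCast, h2]
          _ = Real.exp (Real.log t * s) := Real.rpow_def_of_pos (ht j) s
    _ = Real.exp (∑ j ∈ Finset.range n, Real.log ((p ^ j - D) / (p ^ j + D)) * s) :=
        (Real.exp_sum _ _).symm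
    _ = Real.exp (s * ∑ j ∈ Finset.range n, Real.log ((p ^ j - D) / (p ^ j + D))) := by
        rw [← Finset.sum_mul, mul_comm]

end core3

open scoped ENNReal

abbrev gI := Σ j : ℕ, (Fin j → ℕ)

noncomputable def gX (p : ℝ) (i : gI) : ℝ := ∏ t, gr p (i.2 t)

noncomputable def gC (p D s : ℝ) (i : gI) : ℝ≥0∞ :=
  ENNReal.ofReal (Real.exp (-(gh p D s 0)) / i.1.factorial)
    * ∏ t, ENNReal.ofReal (gb p D s (i.2 t))

noncomputable def gμ (p D s : ℝ) : Measure ℝ :=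
  Measure.sum (fun i : gI => gC p D s i • Measure.dirac (gX p i))

lemma gμ_lintegral (p D s : ℝ) (f : ℝ → ℝ≥0∞) :
    ∫⁻ x, f x ∂(gμ p D s) = ∑' i : gI, gC p D s i * f (gX p i) := by
  rw [gμ, lintegral_sum_measure]
  refine tsum_congr fun i => ?_
  rw [lintegral_smul_measure, lintegral_dirac, smul_eq_mul]

lemma tsum_pi_prod (g : ℕ → ℝ≥0∞) (j : ℕ) :
    ∑' f : Fin j → ℕ, ∏ t, g (f t) = (∑' k, g k) ^ j := by
  induction j with
  | zero =>
    rw [pow_zero]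
    rw [tsum_eq_single (fun t => t.elim0) (fun b hb => absurd (funext fun t => t.elim0) hb.symm)]
    simp
  | succ j ih =>
    have he := (Fin.consEquiv (fun _ : Fin (j + 1) => ℕ)).tsum_eq
      (f := fun f : Fin (j + 1) → ℕ => ∏ t, g (f t))
    rw [← he]
    have : ∀ x : ℕ × (Fin j → ℕ),
        (∏ t, g ((Fin.consEquiv (fun _ : Fin (j + 1) => ℕ)) x t))
          = g x.1 * ∏ t, g (x.2 t) := by
      intro x
      rw [show ((Fin.consEquiv (fun _ : Fin (j + 1) => ℕ)) x) = Fin.cons x.1 x.2 from rfl]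
      simp [Fin.prod_univ_succ]
    rw [tsum_congr this, ENNReal.tsum_prod']
    simp only [ENNReal.tsum_mul_left, ENNReal.tsum_mul_right]
    rw [ih, pow_succ']

section core4
variable {p D s : ℝ} (hp : 1 < p) (hD0 : 0 < D) (hD1 : D < 1) (hs : 0 < s)

include hp hD0 hD1 hs in
lemma gh_nonneg (n : ℕ) : 0 ≤ gh p D s n :=
  tsum_nonneg fun k => mul_nonneg (gb_nonneg hp hD0 hs k) (pow_nonneg (gr_pos hp k).le n)

include hp hD0 hD1 hs in
lemma gμ_lintegral_pow (n : ℕ) :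
    ∫⁻ x, ENNReal.ofReal (x ^ n) ∂(gμ p D s)
      = ENNReal.ofReal (Real.exp (gh p D s n - gh p D s 0)) := by
  rw [gμ_lintegral]
  have hstep : ∀ i : gI, gC p D s i * ENNReal.ofReal (gX p i ^ n)
      = ENNReal.ofReal (Real.exp (-(gh p D s 0)) / i.1.factorial)
        * ∏ t, ENNReal.ofReal (gb p D s (i.2 t) * gr p (i.2 t) ^ n) := by
    intro i
    rw [gC, gX, ← Finset.prod_pow]
    rw [ENNReal.ofReal_prod_of_nonneg (fun t _ => pow_nonneg (gr_pos hp _).le n)]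
    rw [mul_assoc, ← Finset.prod_mul_distrib]
    congr 1
    refine Finset.prod_congr rfl fun t _ => ?_
    rw [ENNReal.ofReal_mul (gb_nonneg hp hD0 hs _)]
  rw [tsum_congr hstep, ENNReal.tsum_sigma']
  have hinner : ∀ j : ℕ,
      (∑' f : Fin j → ℕ, ENNReal.ofReal (Real.exp (-(gh p D s 0)) / j.factorial)
        * ∏ t, ENNReal.ofReal (gb p D s (f t) * gr p (f t) ^ n))
      = ENNReal.ofReal (Real.exp (-(gh p D s 0)) / j.factorial)
        * ENNReal.ofReal (gh p D s n) ^ j := by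
    intro j
    rw [ENNReal.tsum_mul_left, tsum_pi_prod (fun k => ENNReal.ofReal (gb p D s k * gr p k ^ n)) j]
    congr 2
    rw [← ENNReal.ofReal_tsum_of_nonneg
      (fun k => mul_nonneg (gb_nonneg hp hD0 hs k) (pow_nonneg (gr_pos hp k).le n))
      (gbr_summable hp hD0 hD1 hs n)]
    rfl
  rw [tsum_congr hinner]
  have hterm : ∀ j : ℕ, ENNReal.ofReal (Real.exp (-(gh p D s 0)) / j.factorial)
      * ENNReal.ofReal (gh p D s n) ^ j
      = ENNReal.ofReal (Real.exp (-(gh p D s 0)) * (gh p D s n ^ j / j.factorial)) := by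
    intro j
    rw [← ENNReal.ofReal_pow (gh_nonneg hp hD0 hD1 hs n), ← ENNReal.ofReal_mul (by positivity)]
    congr 1
    ring
  rw [tsum_congr hterm]
  rw [← ENNReal.ofReal_tsum_of_nonneg
    (fun j => mul_nonneg (Real.exp_nonneg _)
      (div_nonneg (pow_nonneg (gh_nonneg hp hD0 hD1 hs n) j) (Nat.cast_nonneg _)))
    (Summable.mul_left _ (Real.summable_pow_div_factorial (gh p D s n)))]
  congr 1
  rw [tsum_mul_left]
  have hexp : ∑' j : ℕ, gh p D s n ^ j / j.factorial = Real.exp (gh p D s n) := by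
    rw [Real.exp_eq_exp_ℝ, NormedSpace.exp_eq_tsum_div]
  rw [hexp, ← Real.exp_add]
  ring_nf

end core4

section core5
variable {p D s : ℝ} (hp : 1 < p) (hD0 : 0 < D) (hD1 : D < 1) (hs : 0 < s)

include hp in
lemma gX_mem (i : gI) : gX p i ∈ Set.Icc (0:ℝ) 1 := by
  constructor
  · exact Finset.prod_nonneg fun t _ => (gr_pos hp _).le
  · exact Finset.prod_le_one (fun t _ => (gr_pos hp _).le)
      (fun t _ => (gr_lt_one hp _).le)

include hp in
lemma gμ_compl_zero : gμ p D s (Set.Icc (0:ℝ) 1)ᶜ = 0 := by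
  have hms : MeasurableSet (Set.Icc (0:ℝ) 1)ᶜ := measurableSet_Icc.compl
  rw [gμ, Measure.sum_apply _ hms]
  convert tsum_zero with i
  rw [Measure.smul_apply, Measure.dirac_apply' _ hms,
    Set.indicator_of_notMem (Set.notMem_compl_iff.2 (gX_mem hp i)), smul_zero]

include hp hD0 hD1 hs in
lemma gμ_fin : IsFiniteMeasure (gμ p D s) := by
  constructor
  have h := gμ_lintegral_pow hp hD0 hD1 hs 0
  simp only [pow_zero, ENNReal.ofReal_one, lintegral_one, sub_self, Real.exp_zero] at h
  rw [h]
  exact ENNReal.one_lt_top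

include hp hD0 hD1 hs in
theorem core_subnormal :
    IsSubnormalWeight (fun m => Real.sqrt ((p ^ m - D) / (p ^ m + D)) ^ s) := by
  have hone : ∀ j : ℕ, (1:ℝ) ≤ p ^ j := fun j => one_le_pow₀ hp.le
  have ht : ∀ j : ℕ, 0 < (p ^ j - D) / (p ^ j + D) := fun j => by
    have := hone j
    apply div_pos <;> linarith
  refine ⟨fun m => Real.rpow_pos_of_pos (Real.sqrt_pos.2 (ht m)) s,
    ⟨1, fun m => ?_⟩, gμ p D s, gμ_fin hp hD0 hD1 hs,
    ⟨Set.Icc 0 1, isCompact_Icc, fun x hx => hx.1, gμ_compl_zero hp⟩, fun n => ?_⟩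
  · apply Real.rpow_le_one (Real.sqrt_nonneg _) _ hs.le
    rw [show (1:ℝ) = Real.sqrt 1 from Real.sqrt_one.symm]
    apply Real.sqrt_le_sqrt
    rw [div_le_one (by linarith [hone m])]
    linarith
  · rw [moments_eq hp hD0 hD1 hs n]
    have hae : (0:ℝ → ℝ) ≤ᵐ[gμ p D s] fun x => x ^ n := by
      have hsub : {x : ℝ | ¬ (0:ℝ → ℝ) x ≤ x ^ n} ⊆ (Set.Icc (0:ℝ) 1)ᶜ := by
        intro x hx hmem
        exact hx (pow_nonneg hmem.1 n)
      exact ae_iff.2 (measure_mono_null hsub (gμ_compl_zero hp))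
    rw [integral_eq_lintegral_of_nonneg_ae hae (continuous_pow n).aestronglyMeasurable]
    rw [gμ_lintegral_pow hp hD0 hD1 hs n, ENNReal.toReal_ofReal (Real.exp_nonneg _)]

end core5

theorem IsSubnormalWeight.mul {a b : ℕ → ℝ} (ha : IsSubnormalWeight a)
    (hb : IsSubnormalWeight b) : IsSubnormalWeight (fun n => a n * b n) := by
  obtain ⟨hapos, ⟨C₁, hC₁⟩, μ₁, hμ₁fin, ⟨K₁, hK₁c, hK₁i, hK₁0⟩, hμ₁m⟩ := ha
  obtain ⟨hbpos, ⟨C₂, hC₂⟩, μ₂, hμ₂fin, ⟨K₂, hK₂c, hK₂i, hK₂0⟩, hμ₂m⟩ := hb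
  refine ⟨fun n => mul_pos (hapos n) (hbpos n), ⟨C₁ * C₂, fun n =>
    mul_le_mul (hC₁ n) (hC₂ n) (hbpos n).le ((hapos 0).trans_le (hC₁ 0)).le⟩, ?_⟩
  have hm : Measurable (fun z : ℝ × ℝ => z.1 * z.2) := measurable_fst.mul measurable_snd
  refine ⟨Measure.map (fun z : ℝ × ℝ => z.1 * z.2) (μ₁.prod μ₂), ?_, ?_, ?_⟩
  · constructor
    rw [Measure.map_apply hm MeasurableSet.univ]
    exact (measure_lt_top _ _)
  · refine ⟨(fun z : ℝ × ℝ => z.1 * z.2) '' (K₁ ×ˢ K₂),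
      (hK₁c.prod hK₂c).image (continuous_fst.mul continuous_snd), ?_, ?_⟩
    · rintro x ⟨⟨y, z⟩, ⟨hy, hz⟩, rfl⟩
      exact mul_nonneg (Set.mem_Ici.1 (hK₁i hy)) (Set.mem_Ici.1 (hK₂i hz))
    · set K := (fun z : ℝ × ℝ => z.1 * z.2) '' (K₁ ×ˢ K₂) with hK
      have hKm : MeasurableSet Kᶜ :=
        (((hK₁c.prod hK₂c).image (continuous_fst.mul continuous_snd)).isClosed.measurableSet).compl
      rw [Measure.map_apply hm hKm]
      refine measure_mono_null (?_ : _ ⊆ (K₁ᶜ ×ˢ (Set.univ : Set ℝ)) ∪ ((Set.univ : Set ℝ) ×ˢ K₂ᶜ)) ?_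
      · intro z hz
        by_contra hcon
        simp only [Set.mem_union, Set.mem_prod, Set.mem_univ, and_true, true_and,
          Set.mem_compl_iff, not_or, not_not] at hcon
        exact hz (Set.mem_image_of_mem _ (Set.mk_mem_prod hcon.1 hcon.2))
      · refine measure_union_null ?_ ?_
        · rw [Measure.prod_prod, hK₁0, zero_mul]
        · rw [Measure.prod_prod, hK₂0, mul_zero]
  · intro n
    have hmom : moments (fun n => a n * b n) n = moments a n * moments b n := by
      simp only [moments, mul_pow, Finset.prod_mul_distrib]
    rw [hmom, hμ₁m n, hμ₂m n]
    rw [integral_map hm.aemeasurable (by fun_prop)]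
    have : ∀ z : ℝ × ℝ, (z.1 * z.2) ^ n = z.1 ^ n * z.2 ^ n := fun z => mul_pow _ _ _
    simp only [this]
    exact (integral_prod_mul (L := ℝ) (μ := μ₁) (ν := μ₂) (fun x => x ^ n) (fun y => y ^ n)).symm


/-- Theorem 5.1: for `(N,D)` in Sector II, `MQ_{(N,−D)} ⊆ MQ_{(N,D)}`. -/
theorem MQ_subset_sectorII (p N D : ℝ) (hp : 1 < p)
    (hN1 : -1 < N) (hN0 : N < 0) (hD0 : 0 < D) (hND : D ≤ -N) :
    ∀ M P : ℝ, -1 < M → M < 1 → -1 < P → P < 1 →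
      MIDSubord p N (-D) M P → MIDSubord p N D M P := by
  intro M P hM1 hM2 hP1 hP2 hmid
  intro s hs
  have hD1 : D < 1 := lt_of_le_of_lt hND (by linarith)
  have hone : ∀ n : ℕ, (1:ℝ) ≤ p ^ n := fun n => one_le_pow₀ hp.le
  show IsSubnormalWeight fun n => (grws p N D n / grws p M P n) ^ s
  have key : (fun n => (grws p N D n / grws p M P n) ^ s)
      = fun n => (Real.sqrt ((p ^ n - D) / (p ^ n + D)) ^ s)
          * ((grws p N (-D) n / grws p M P n) ^ s) := by
    funext n
    have h1 : (0:ℝ) < p ^ n + N := by linarith [hone n]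
    have h2 : (0:ℝ) < p ^ n - D := by linarith [hone n]
    have h3 : (0:ℝ) < p ^ n + D := by linarith [hone n]
    have hfac : grws p N D n
        = Real.sqrt ((p ^ n - D) / (p ^ n + D)) * grws p N (-D) n := by
      rw [grws, grws, ← Real.sqrt_mul (le_of_lt (div_pos h2 h3))]
      congr 1
      rw [show p ^ n + -D = p ^ n - D by ring]
      field_simp
    rw [hfac, mul_div_assoc]
    exact Real.mul_rpow (Real.sqrt_nonneg _)
      (div_nonneg (Real.sqrt_nonneg _) (Real.sqrt_nonneg _))
  rw [key]
  exact IsSubnormalWeight.mul (core_subnormal hp hD0 hD1 hs) (hmid s hs)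
end

section
/- (Green zone for Sector I; Sections 4.2–4.4.) Fix p > 1 and let (N,D) lie in Sector I, i.e., −1 < N ≤ D ≤ 0. Then for every q with 0 ≤ q ≤ −N and every P' with N ≤ P' ≤ D, one has (N,D) ≫ (N+q, P'+q). -/
open MeasureTheory

/-!
With `u = p⁻ⁿ`, the squared quotient weight `(α_n(N,D)/α_n(M,P))²` equals
`(1 + N u)(1 + P u) / ((1 + D u)(1 + M u))`, so its negative logarithm is a power series
`∑ₖ aₖ u^(k+1)` in `u`. In Sector I the coefficients `aₖ` of `(N,D)` over `(N+q, P'+q)` are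
nonnegative, by an elementary majorization inequality for `x ↦ x^(k+1)`.

Nonnegative coefficients suffice: for the weight `w = exp(-g/2)` with `g_n = ∑ₖ aₖ t^(n(k+1))`,
the moments of `wˢ` are `e^{-S₀} e^{Sₙ}` with `Sₙ = ∑_{j ≥ n} s g_j = ∑ₖ bₖ yₖⁿ`, where
`bₖ = s aₖ / (1 - t^(k+1)) ≥ 0` and `yₖ = t^(k+1) ∈ [0,1]`. Expanding the exponential,
`exp (∑ₖ bₖ yₖⁿ)` is the `n`-th moment of the atomic measure with an atom at `∏ᵢ y_{f i}` of mass
`∏ᵢ b_{f i} / j!` for every tuple `f : Fin j → ℕ`.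
-/

open Finset

def HasBergerMeasure (γ : ℕ → ℝ) : Prop :=
  ∃ μ : Measure ℝ, IsFiniteMeasure μ ∧
    (∃ K : Set ℝ, IsCompact K ∧ K ⊆ Set.Ici (0 : ℝ) ∧ μ Kᶜ = 0) ∧
    ∀ n : ℕ, γ n = ∫ x, x ^ n ∂μ

theorem hasBergerMeasure_tsum {ι : Type*} {c x : ι → ℝ} (hc : ∀ i, 0 ≤ c i) (hcs : Summable c)
    (hx : ∀ i, x i ∈ Set.Icc (0 : ℝ) 1) : HasBergerMeasure fun n => ∑' i, c i * x i ^ n := by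
  set μ := Measure.sum fun i => ENNReal.ofReal (c i) • Measure.dirac (x i)
  have hfin : IsFiniteMeasure μ := by
    constructor
    simp only [μ, Measure.sum_apply _ MeasurableSet.univ, Measure.smul_apply, measure_univ,
      smul_eq_mul, mul_one]
    rw [← ENNReal.ofReal_tsum_of_nonneg hc hcs]
    exact ENNReal.ofReal_lt_top
  have hsupp : μ (Set.Icc 0 1)ᶜ = 0 := by
    simp [μ, Measure.sum_apply _ measurableSet_Icc.compl, hx]
  refine ⟨μ, hfin, ⟨Set.Icc 0 1, isCompact_Icc, fun _ hy => hy.1, hsupp⟩, fun n => ?_⟩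
  have hbound : ∀ᵐ y ∂μ, ‖y ^ n‖ ≤ 1 := by
    filter_upwards [ae_iff.2 hsupp] with y hy
    rw [norm_pow, Real.norm_of_nonneg hy.1]
    exact pow_le_one₀ hy.1 hy.2
  beta_reduce
  rw [integral_sum_measure (Integrable.of_bound (continuous_pow n).aestronglyMeasurable 1 hbound)]
  congr 1 with i
  rw [integral_smul_measure, integral_dirac, ENNReal.toReal_ofReal (hc i), smul_eq_mul]

theorem hasSum_pi_fin_prod {α : Type*} {v : α → ℝ} (hv : ∀ a, 0 ≤ v a) (hs : Summable v)
    (j : ℕ) : HasSum (fun f : Fin j → α => ∏ i, v (f i)) ((∑' a, v a) ^ j) := by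
  induction j with
  | zero => simp
  | succ j ih =>
    set g := fun f : Fin j → α => ∏ i, v (f i)
    have hg : 0 ≤ g := fun f => prod_nonneg fun i _ => hv (f i)
    have hcons : (fun f : Fin (j + 1) → α => ∏ i, v (f i)) ∘ Fin.consEquiv (fun _ => α) =
        fun x => v x.1 * g x.2 :=
      funext fun x => Fin.prod_univ_succ fun i => v ((Fin.cons x.1 x.2 : Fin (j + 1) → α) i)
    rw [pow_succ', ← (Fin.consEquiv fun _ : Fin (j + 1) => α).hasSum_iff, hcons]
    exact hs.hasSum.mul ih (hs.mul_of_nonneg ih.summable hv hg)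

theorem hasSum_sigma_prod_div_factorial {α : Type*} {v : α → ℝ} (hv : ∀ a, 0 ≤ v a)
    (hs : Summable v) :
    HasSum (fun σ : Σ j, Fin j → α => (∏ i, v (σ.2 i)) / σ.1.factorial)
      (Real.exp (∑' a, v a)) := by
  have hfiber j := (hasSum_pi_fin_prod hv hs j).div_const (j.factorial : ℝ)
  have hexp := NormedSpace.expSeries_div_hasSum_exp (∑' a, v a)
  rw [← Real.exp_eq_exp_ℝ] at hexp
  have hsum : Summable fun σ : Σ j, Fin j → α => (∏ i, v (σ.2 i)) / σ.1.factorial :=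
    (summable_sigma_of_nonneg fun σ => div_nonneg (prod_nonneg fun i _ => hv _) (by positivity)).2
      ⟨fun j => (hfiber j).summable, by simpa only [(hfiber _).tsum_eq] using hexp.summable⟩
  rw [← (hsum.hasSum.sigma hfiber).unique hexp]
  exact hsum.hasSum

theorem hasBergerMeasure_mul_exp_tsum {C : ℝ} {b y : ℕ → ℝ} (hC : 0 ≤ C) (hb : ∀ k, 0 ≤ b k)
    (hbs : Summable b) (hy : ∀ k, y k ∈ Set.Icc (0 : ℝ) 1) :
    HasBergerMeasure fun n => C * Real.exp (∑' k, b k * y k ^ n) := by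
  have hW := hasSum_sigma_prod_div_factorial hb hbs
  have hmoment (n : ℕ) : C * Real.exp (∑' k, b k * y k ^ n) =
      ∑' σ : Σ j, Fin j → ℕ, C * ((∏ i, b (σ.2 i)) / σ.1.factorial) * (∏ i, y (σ.2 i)) ^ n := by
    have hbyn : ∀ k, 0 ≤ b k * y k ^ n := fun k => mul_nonneg (hb k) (pow_nonneg (hy k).1 n)
    have hsn : Summable fun k => b k * y k ^ n := hbs.of_nonneg_of_le hbyn
      fun k => mul_le_of_le_one_right (hb k) (pow_le_one₀ (hy k).1 (hy k).2)
    rw [← (hasSum_sigma_prod_div_factorial hbyn hsn).tsum_eq, ← tsum_mul_left]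
    congr 1 with σ
    rw [prod_mul_distrib, prod_pow]
    ring
  rw [funext hmoment]
  exact hasBergerMeasure_tsum (fun σ => mul_nonneg hC (div_nonneg
    (prod_nonneg fun i _ => hb _) (Nat.cast_nonneg _))) (hW.summable.mul_left C)
    fun σ => ⟨prod_nonneg fun i _ => (hy _).1,
      prod_le_one (fun i _ => (hy _).1) fun i _ => (hy _).2⟩

theorem hasSum_of_prod_fiberwise_of_nonneg {β γ : Type*} {f : β × γ → ℝ} (hf : 0 ≤ f)
    {g : β → ℝ} {h : γ → ℝ} {a : ℝ} (hg : ∀ b, HasSum (fun c => f (b, c)) (g b)) (hga : HasSum g a)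
    (hh : ∀ c, HasSum (fun b => f (b, c)) (h c)) : HasSum h a := by
  have hs : Summable f := (summable_prod_of_nonneg hf).2
    ⟨fun b => (hg b).summable, by simpa only [(hg _).tsum_eq] using hga.summable⟩
  rw [← (hs.hasSum.prod_fiberwise hg).unique hga]
  exact ((Equiv.prodComm γ β).hasSum_iff.2 hs.hasSum).prod_fiberwise hh

section LogSeries

variable {t : ℝ} {a : ℕ → ℝ}

theorem summable_div_one_sub_pow (ht0 : 0 ≤ t) (ht1 : t < 1) (ha : ∀ k, 0 ≤ a k)
    (has : Summable a) : Summable fun k => a k / (1 - t ^ (k + 1)) :=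
  (has.div_const (1 - t)).of_nonneg_of_le
    (fun k => div_nonneg (ha k) (sub_nonneg.2 (pow_le_one₀ ht0 ht1.le)))
    fun k => div_le_div_of_nonneg_left (ha k) (sub_pos.2 ht1)
      (by linarith [pow_le_of_le_one ht0 ht1.le k.add_one_ne_zero])

theorem hasSum_tail_of_hasSum_pow {g : ℕ → ℝ} (ht0 : 0 ≤ t) (ht1 : t < 1) (ha : ∀ k, 0 ≤ a k)
    (has : Summable a) (hg : ∀ m, HasSum (fun k => a k * (t ^ m) ^ (k + 1)) (g m)) (n : ℕ) :
    HasSum (fun j => g (j + n)) (∑' k, a k / (1 - t ^ (k + 1)) * (t ^ (k + 1)) ^ n) := by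
  have htk (k : ℕ) : t ^ (k + 1) < 1 := pow_lt_one₀ ht0 ht1 k.add_one_ne_zero
  have hcol (k : ℕ) : HasSum (fun j => a k * (t ^ (j + n)) ^ (k + 1))
      (a k / (1 - t ^ (k + 1)) * (t ^ (k + 1)) ^ n) := by
    rw [div_mul_eq_mul_div, div_eq_mul_inv]
    exact ((hasSum_geometric_of_lt_one (by positivity) (htk k)).mul_left
      (a k * (t ^ (k + 1)) ^ n)).congr_fun fun j => by ring
  have hb (k : ℕ) : 0 ≤ a k / (1 - t ^ (k + 1)) := div_nonneg (ha k) (sub_nonneg.2 (htk k).le)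
  refine hasSum_of_prod_fiberwise_of_nonneg
    (f := fun kj : ℕ × ℕ => a kj.1 * (t ^ (kj.2 + n)) ^ (kj.1 + 1))
    (fun kj => mul_nonneg (ha _) (by positivity)) hcol ?_ fun j => hg (j + n)
  exact ((summable_div_one_sub_pow ht0 ht1 ha has).of_nonneg_of_le
    (fun k => mul_nonneg (hb k) (by positivity))
    fun k => mul_le_of_le_one_right (hb k) (pow_le_one₀ (by positivity) (htk k).le)).hasSum

theorem isSubnormalWeight_of_hasSum_neg_log {w : ℕ → ℝ} (hw : ∀ m, 0 < w m) (ht0 : 0 ≤ t)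
    (ht1 : t < 1) (ha : ∀ k, 0 ≤ a k)
    (hg : ∀ m, HasSum (fun k => a k * (t ^ m) ^ (k + 1)) (-Real.log (w m ^ 2))) :
    IsSubnormalWeight w := by
  have has : Summable a := by simpa using (hg 0).summable
  set b := fun k => a k / (1 - t ^ (k + 1))
  set S := fun n => ∑' k, b k * (t ^ (k + 1)) ^ n
  have htail := hasSum_tail_of_hasSum_pow ht0 ht1 ha has hg
  have hpartial (n : ℕ) : ∑ j ∈ range n, -Real.log (w j ^ 2) = S 0 - S n := by
    have h0 := htail 0
    simp only [add_zero] at h0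
    linarith [((hasSum_nat_add_iff' n).2 h0).unique (htail n)]
  have hmoments (n : ℕ) : moments w n = Real.exp (-S 0) * Real.exp (S n) :=
    calc moments w n = ∏ j ∈ range n, Real.exp (-(-Real.log (w j ^ 2))) :=
          prod_congr rfl fun j _ => by rw [neg_neg, Real.exp_log (pow_pos (hw j) 2)]
      _ = Real.exp (-S 0) * Real.exp (S n) := by
          rw [← Real.exp_sum, sum_neg_distrib, hpartial, ← Real.exp_add]
          ring_nf
  have hw1 (m : ℕ) : w m ≤ 1 := by
    have hg0 := (hg m).nonneg fun k => mul_nonneg (ha k) (by positivity)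
    rw [neg_nonneg, Real.log_nonpos_iff (by positivity), sq_le_one_iff₀ (hw m).le] at hg0
    exact hg0
  have hB : HasBergerMeasure (moments w) := by
    rw [funext hmoments]
    exact hasBergerMeasure_mul_exp_tsum (Real.exp_nonneg _)
      (fun k => div_nonneg (ha k) (sub_nonneg.2 (pow_le_one₀ ht0 ht1.le)))
      (summable_div_one_sub_pow ht0 ht1 ha has)
      fun k => ⟨by positivity, pow_le_one₀ ht0 ht1.le⟩
  exact ⟨hw, ⟨1, hw1⟩, hB⟩

theorem isMIDWeight_of_hasSum_neg_log {w : ℕ → ℝ} (hw : ∀ m, 0 < w m) (ht0 : 0 ≤ t)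
    (ht1 : t < 1) (ha : ∀ k, 0 ≤ a k)
    (hg : ∀ m, HasSum (fun k => a k * (t ^ m) ^ (k + 1)) (-Real.log (w m ^ 2))) :
    IsMIDWeight w := fun s hs =>
  isSubnormalWeight_of_hasSum_neg_log (a := fun k => s * a k)
    (fun m => Real.rpow_pos_of_pos (hw m) s) ht0 ht1 (fun k => mul_nonneg hs.le (ha k)) fun m => by
    have hlog : -Real.log ((w m ^ s) ^ 2) = s * -Real.log (w m ^ 2) := by
      rw [Real.log_pow, Real.log_pow, Real.log_rpow (hw m)]
      ring
    rw [hlog]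
    exact ((hg m).mul_left s).congr_fun fun k => mul_assoc _ _ _

end LogSeries

theorem hasSum_neg_log_one_add {x : ℝ} (hx : |x| < 1) :
    HasSum (fun k : ℕ => (-x) ^ (k + 1) / (k + 1)) (-Real.log (1 + x)) := by
  simpa using Real.hasSum_pow_div_log_of_abs_lt_one (x := -x) (by rwa [abs_neg])

theorem grws_pos {p N D : ℝ} (hp : 1 ≤ p) (hN : -1 < N) (hD : -1 < D) (m : ℕ) :
    0 < grws p N D m := by
  have := one_le_pow₀ (n := m) hp
  exact Real.sqrt_pos.2 (div_pos (by linarith) (by linarith))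

-- The coefficient of `u ^ (k + 1)` in `-log ((1 + N u) / (1 + D u))`.
noncomputable def grwsCoeff (N D : ℝ) (k : ℕ) : ℝ := ((-N) ^ (k + 1) - (-D) ^ (k + 1)) / (k + 1)

theorem hasSum_neg_log_grws_sq {p N D : ℝ} (hp : 1 ≤ p) (hN : |N| < 1) (hD : |D| < 1) (m : ℕ) :
    HasSum (fun k => grwsCoeff N D k * (p⁻¹ ^ m) ^ (k + 1)) (-Real.log (grws p N D m ^ 2)) := by
  set u := p⁻¹ ^ m
  have hu0 : 0 ≤ u := by positivity
  have hu1 : u ≤ 1 := pow_le_one₀ (by positivity) (inv_le_one_of_one_le₀ hp)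
  have hsmall {x : ℝ} (hx : |x| < 1) : |x * u| < 1 := by
    rw [abs_mul, abs_of_nonneg hu0]
    nlinarith [abs_nonneg x]
  have hpos {x : ℝ} (hx : |x| < 1) : 0 < 1 + x * u := by
    linarith [(abs_lt.1 (hsmall hx)).1]
  have hpm : 0 < p ^ m := by positivity
  have hsq : grws p N D m ^ 2 = (1 + N * u) / (1 + D * u) := by
    have hscale (x : ℝ) : p ^ m + x = p ^ m * (1 + x * u) := by
      simp only [u, inv_pow]
      field_simp
    rw [grws, hscale N, hscale D, mul_div_mul_left _ _ hpm.ne',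
      Real.sq_sqrt (div_pos (hpos hN) (hpos hD)).le]
  rw [hsq, Real.log_div (hpos hN).ne' (hpos hD).ne', neg_sub']
  exact ((hasSum_neg_log_one_add (hsmall hN)).sub (hasSum_neg_log_one_add (hsmall hD))).congr_fun
    fun k => by rw [grwsCoeff]; ring

theorem hasSum_neg_log_grws_div_sq {p N D M P : ℝ} (hp : 1 ≤ p) (hN : |N| < 1) (hD : |D| < 1)
    (hM : |M| < 1) (hP : |P| < 1) (m : ℕ) :
    HasSum (fun k => (grwsCoeff N D k - grwsCoeff M P k) * (p⁻¹ ^ m) ^ (k + 1))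
      (-Real.log ((grws p N D m / grws p M P m) ^ 2)) := by
  have hpos {x y : ℝ} (hx : |x| < 1) (hy : |y| < 1) : grws p x y m ^ 2 ≠ 0 :=
    (pow_pos (grws_pos hp (abs_lt.1 hx).1 (abs_lt.1 hy).1 m) 2).ne'
  rw [div_pow, Real.log_div (hpos hN hD) (hpos hM hP), neg_sub']
  exact ((hasSum_neg_log_grws_sq hp hN hD m).sub (hasSum_neg_log_grws_sq hp hM hP m)).congr_fun
    fun k => sub_mul _ _ _

theorem midSubord_of_grwsCoeff_le {p N D M P : ℝ} (hp : 1 < p) (hN : |N| < 1) (hD : |D| < 1)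
    (hM : |M| < 1) (hP : |P| < 1) (hcoeff : ∀ k, grwsCoeff M P k ≤ grwsCoeff N D k) :
    MIDSubord p N D M P :=
  isMIDWeight_of_hasSum_neg_log
    (fun m => div_pos (grws_pos hp.le (abs_lt.1 hN).1 (abs_lt.1 hD).1 m)
      (grws_pos hp.le (abs_lt.1 hM).1 (abs_lt.1 hP).1 m))
    (inv_nonneg.2 (by linarith)) (inv_lt_one_of_one_lt₀ hp) (fun k => sub_nonneg.2 (hcoeff k))
    (hasSum_neg_log_grws_div_sq hp.le hN hD hM hP)

theorem pow_sub_pow_le_pow_sub_pow {a x y z : ℝ} (k : ℕ) (hz : 0 ≤ z) (hzy : z ≤ y)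
    (hzx : z ≤ x) (hya : y ≤ a) (h : y - z ≤ a - x) : y ^ k - z ^ k ≤ a ^ k - x ^ k :=
  calc y ^ k - z ^ k = (∑ i ∈ range k, y ^ i * z ^ (k - 1 - i)) * (y - z) :=
        (geom_sum₂_mul y z k).symm
    _ ≤ (∑ i ∈ range k, a ^ i * x ^ (k - 1 - i)) * (a - x) := by
        have hx : 0 ≤ x := hz.trans hzx
        have ha : 0 ≤ a := (hz.trans hzy).trans hya
        have hy : 0 ≤ y := hz.trans hzy
        gcongr
    _ = a ^ k - x ^ k := geom_sum₂_mul a x k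

theorem pow_add_pow_le_pow_add_pow {a x y z : ℝ} (k : ℕ) (hx : 0 ≤ x) (hy : 0 ≤ y) (hz : 0 ≤ z)
    (hxa : x ≤ a) (hya : y ≤ a) (h : x + y ≤ a + z) : x ^ k + y ^ k ≤ a ^ k + z ^ k := by
  wlog hyx : y ≤ x generalizing x y
  · linarith [this hy hx hya hxa (by linarith) (by linarith)]
  rcases le_total y z with hyz | hzy
  · linarith [pow_le_pow_left₀ hx hxa k, pow_le_pow_left₀ hy hyz k]
  · linarith [pow_sub_pow_le_pow_sub_pow k hz hzy (hzy.trans hyx) hya (by linarith)]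

theorem pow_add_sub_pow_le_pow_add_sub_pow {a b d q : ℝ} (k : ℕ) (hd : 0 ≤ d) (hdb : d ≤ b)
    (hba : b ≤ a) (hq : 0 ≤ q) (hqa : q ≤ a) : d ^ k + (a - q) ^ k ≤ a ^ k + (b - q) ^ k := by
  rcases le_or_gt q b with hqb | hbq
  · exact pow_add_pow_le_pow_add_pow k hd (by linarith) (by linarith) (by linarith)
      (by linarith) (by linarith)
  rcases Nat.even_or_odd k with hk | hk
  · rw [show b - q = -(q - b) by ring, hk.neg_pow]
    exact pow_add_pow_le_pow_add_pow k hd (by linarith) (by linarith) (by linarith)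
      (by linarith) (by linarith)
  · rw [show b - q = -(q - b) by ring, hk.neg_pow]
    have hk0 : k ≠ 0 := hk.pos.ne'
    have := (pow_add_pow_le (add_nonneg hd (sub_nonneg.2 hqa)) (sub_nonneg.2 hbq.le) hk0).trans
      (pow_le_pow_left₀ (by linarith) (show d + (a - q) + (q - b) ≤ a by linarith) k)
    linarith [pow_add_pow_le hd (sub_nonneg.2 hqa) hk0]

theorem grwsCoeff_shift_le {N D P' q : ℝ} (hNP' : N ≤ P') (hP'D : P' ≤ D) (hD0 : D ≤ 0)
    (hq0 : 0 ≤ q) (hqN : q ≤ -N) (k : ℕ) : grwsCoeff (N + q) (P' + q) k ≤ grwsCoeff N D k := by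
  have := pow_add_sub_pow_le_pow_add_sub_pow (k + 1) (neg_nonneg.2 hD0) (neg_le_neg hP'D)
    (neg_le_neg hNP') hq0 hqN
  rw [grwsCoeff, grwsCoeff, show -(N + q) = -N - q by ring, show -(P' + q) = -P' - q by ring]
  exact div_le_div_of_nonneg_right (by linarith) (by positivity)

/-- green zone for Sector I; Sections 4.2–4.4. -/
theorem green_zone_sectorI (p N D : ℝ) (hp : 1 < p)
    (hN1 : -1 < N) (hND : N ≤ D) (hD0 : D ≤ 0) :
    ∀ q P' : ℝ, 0 ≤ q → q ≤ -N → N ≤ P' → P' ≤ D →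
      MIDSubord p N D (N + q) (P' + q) := by
  intro q P' hq0 hqN hNP' hP'D
  have habs {x : ℝ} (h₁ : N ≤ x) (h₂ : x ≤ -N) : |x| < 1 := abs_lt.2 ⟨by linarith, by linarith⟩
  exact midSubord_of_grwsCoeff_le hp (habs le_rfl (by linarith)) (habs hND (by linarith))
    (habs (by linarith) (by linarith)) (habs (by linarith) (by linarith))
    (grwsCoeff_shift_le hNP' hP'D hD0 hq0 hqN)
end

section
/- (Complete monotonicity claim in Sections 4.3 and 6.) Fix p > 1 and let N, D, q be reals with −1 < D ≤ 0, −1 < N + q ≤ 0, and q(D − N) ≥ 0. Then the function x ↦ q(D − N) / ((p^x + D)(p^x + N + q)) is completely monotone on (0,∞); consequently f(x) = 1 − q(D − N)/((p^x + D)(p^x + N + q)) has completely monotone derivative, i.e., (−1)^n f^{(n+1)}(x) ≥ 0 for all n ≥ 0 and x > 0. -/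
open Real Filter Set

namespace CM14

inductive Cone (p s₁ s₂ : ℝ) : (ℝ → ℝ) → Prop
  | atom (j₁ j₂ m₁ m₂ : ℕ) (h₁ : j₁ ≤ m₁ + 1) (h₂ : j₂ ≤ m₂ + 1) :
      Cone p s₁ s₂ (fun x => (p ^ x) ^ (j₁ + j₂) /
        ((p ^ x - s₁) ^ (m₁ + 1) * (p ^ x - s₂) ^ (m₂ + 1)))
  | zero : Cone p s₁ s₂ (fun _ => 0)
  | add {f g} : Cone p s₁ s₂ f → Cone p s₁ s₂ g → Cone p s₁ s₂ (fun x => f x + g x)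
  | smul (c : ℝ) (hc : 0 ≤ c) {f} : Cone p s₁ s₂ f → Cone p s₁ s₂ (fun x => c * f x)

variable {p s₁ s₂ : ℝ}

lemma one_lt_rpow_self (hp : 1 < p) {x : ℝ} (hx : 0 < x) : 1 < p ^ x :=
  (Real.one_lt_rpow_iff_of_pos (by linarith)).mpr (Or.inl ⟨hp, hx⟩)

lemma cone_nonneg (hp : 1 < p) (hs₁ : s₁ < 1) (hs₂ : s₂ < 1) {f}
    (hf : Cone p s₁ s₂ f) : ∀ x, 0 < x → 0 ≤ f x := by
  induction hf with
  | atom j₁ j₂ m₁ m₂ h₁ h₂ =>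
    intro x hx
    have hy := one_lt_rpow_self hp hx
    have hd₁ : (0:ℝ) < p ^ x - s₁ := by linarith
    have hd₂ : (0:ℝ) < p ^ x - s₂ := by linarith
    have hy0 : (0:ℝ) ≤ p ^ x := by linarith
    positivity
  | zero => intro x hx; exact le_refl _
  | add hf hg ihf ihg => intro x hx; exact add_nonneg (ihf x hx) (ihg x hx)
  | smul c hc hf ih => intro x hx; exact mul_nonneg hc (ih x hx)

lemma pow_deriv_aux (y L : ℝ) (j : ℕ) :
    (j : ℝ) * y ^ (j - 1) * (y * L) = (j : ℝ) * L * y ^ j := by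
  cases j with
  | zero => simp
  | succ n => rw [Nat.add_sub_cancel, pow_succ]; ring

lemma cone_hasDerivAt (hp : 1 < p) (hs₁ : 0 ≤ s₁) (hs₁' : s₁ < 1)
    (hs₂ : 0 ≤ s₂) (hs₂' : s₂ < 1) {f} (hf : Cone p s₁ s₂ f) :
    ∃ f', Cone p s₁ s₂ f' ∧
      ∀ x, 0 < x → HasDerivAt f (-(Real.log p * f' x)) x := by
  have hp0 : (0:ℝ) < p := by linarith
  induction hf with
  | atom j₁ j₂ m₁ m₂ h₁ h₂ =>
    refine ⟨fun x =>
      (((m₁ + 1 - j₁ : ℕ) : ℝ) * ((p ^ x) ^ ((j₁ + 1) + j₂) /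
          ((p ^ x - s₁) ^ ((m₁ + 1) + 1) * (p ^ x - s₂) ^ (m₂ + 1))) +
        ((j₁ : ℝ) * s₁) * ((p ^ x) ^ (j₁ + j₂) /
          ((p ^ x - s₁) ^ ((m₁ + 1) + 1) * (p ^ x - s₂) ^ (m₂ + 1)))) +
      (((m₂ + 1 - j₂ : ℕ) : ℝ) * ((p ^ x) ^ (j₁ + (j₂ + 1)) /
          ((p ^ x - s₁) ^ (m₁ + 1) * (p ^ x - s₂) ^ ((m₂ + 1) + 1))) +
        ((j₂ : ℝ) * s₂) * ((p ^ x) ^ (j₁ + j₂) /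
          ((p ^ x - s₁) ^ (m₁ + 1) * (p ^ x - s₂) ^ ((m₂ + 1) + 1)))), ?_, ?_⟩
    · exact Cone.add
        (Cone.add
          (Cone.smul _ (Nat.cast_nonneg _) (Cone.atom (j₁+1) j₂ (m₁+1) m₂ (by omega) (by omega)))
          (Cone.smul _ (mul_nonneg (Nat.cast_nonneg _) hs₁) (Cone.atom j₁ j₂ (m₁+1) m₂ (by omega) (by omega))))
        (Cone.add
          (Cone.smul _ (Nat.cast_nonneg _) (Cone.atom j₁ (j₂+1) m₁ (m₂+1) (by omega) (by omega)))
          (Cone.smul _ (mul_nonneg (Nat.cast_nonneg _) hs₂) (Cone.atom j₁ j₂ m₁ (m₂+1) (by omega) (by omega))))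
    · intro x hx
      have hy := one_lt_rpow_self hp hx
      have hd₁ : (0:ℝ) < p ^ x - s₁ := by linarith
      have hd₂ : (0:ℝ) < p ^ x - s₂ := by linarith
      have hu : HasDerivAt (fun x : ℝ => p ^ x) (p ^ x * Real.log p) x :=
        (Real.hasStrictDerivAt_const_rpow hp0 x).hasDerivAt
      have hnum : HasDerivAt (fun x : ℝ => (p ^ x) ^ (j₁ + j₂))
          (((j₁ + j₂ : ℕ) : ℝ) * Real.log p * (p ^ x) ^ (j₁ + j₂)) x := by
        have := hu.pow (j₁ + j₂)
        rwa [pow_deriv_aux] at this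
      have hden1 : HasDerivAt (fun x : ℝ => (p ^ x - s₁) ^ (m₁ + 1))
          (((m₁ + 1 : ℕ) : ℝ) * (p ^ x - s₁) ^ m₁ * (p ^ x * Real.log p)) x := by
        have := (hu.sub_const s₁).pow (m₁ + 1)
        rwa [Nat.add_sub_cancel] at this
      have hden2 : HasDerivAt (fun x : ℝ => (p ^ x - s₂) ^ (m₂ + 1))
          (((m₂ + 1 : ℕ) : ℝ) * (p ^ x - s₂) ^ m₂ * (p ^ x * Real.log p)) x := by
        have := (hu.sub_const s₂).pow (m₂ + 1)
        rwa [Nat.add_sub_cancel] at this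
      have hden := hden1.mul hden2
      have hne : (p ^ x - s₁) ^ (m₁ + 1) * (p ^ x - s₂) ^ (m₂ + 1) ≠ 0 := by positivity
      have hdiv := hnum.div hden hne
      refine hdiv.congr_deriv ?_
      have e₁ : ((m₁ + 1 - j₁ : ℕ) : ℝ) = (m₁ : ℝ) + 1 - (j₁ : ℝ) := by
        rw [Nat.cast_sub h₁]; push_cast; ring
      have e₂ : ((m₂ + 1 - j₂ : ℕ) : ℝ) = (m₂ : ℝ) + 1 - (j₂ : ℝ) := by
        rw [Nat.cast_sub h₂]; push_cast; ring
      rw [e₁, e₂]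
      simp only [Pi.mul_apply]
      push_cast
      field_simp
      ring
  | zero =>
    exact ⟨fun _ => 0, Cone.zero, fun x hx => by simpa using hasDerivAt_const x (0:ℝ)⟩
  | add hf hg ihf ihg =>
    obtain ⟨f', hf', hdf⟩ := ihf
    obtain ⟨g', hg', hdg⟩ := ihg
    refine ⟨fun x => f' x + g' x, Cone.add hf' hg', fun x hx => ?_⟩
    have := (hdf x hx).add (hdg x hx)
    refine this.congr_deriv ?_
    ring
  | smul c hc hf ih =>
    obtain ⟨f', hf', hdf⟩ := ih
    refine ⟨fun x => c * f' x, Cone.smul c hc hf', fun x hx => ?_⟩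
    have := (hdf x hx).const_mul c
    refine this.congr_deriv ?_
    ring


lemma cone_iteratedDeriv (hp : 1 < p) (hs₁ : 0 ≤ s₁) (hs₁' : s₁ < 1)
    (hs₂ : 0 ≤ s₂) (hs₂' : s₂ < 1) {f} (hf : Cone p s₁ s₂ f) (n : ℕ) :
    ∃ h, Cone p s₁ s₂ h ∧
      ∀ x, 0 < x → iteratedDeriv n f x = (-1) ^ n * Real.log p ^ n * h x := by
  induction n with
  | zero => exact ⟨f, hf, fun x hx => by simp⟩
  | succ n ih =>
    obtain ⟨h, hh, heq⟩ := ih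
    obtain ⟨h', hh', hd⟩ := cone_hasDerivAt hp hs₁ hs₁' hs₂ hs₂' hh
    refine ⟨h', hh', fun x hx => ?_⟩
    rw [iteratedDeriv_succ]
    have hev : iteratedDeriv n f =ᶠ[nhds x] fun y => (-1) ^ n * Real.log p ^ n * h y :=
      Filter.eventually_of_mem (Ioi_mem_nhds hx) fun y hy => heq y hy
    rw [hev.deriv_eq, deriv_const_mul_field, (hd x hx).deriv]
    ring

lemma iteratedDeriv_neg'' (n : ℕ) (f : ℝ → ℝ) :
    iteratedDeriv n (fun x => -f x) = fun x => -iteratedDeriv n f x := by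
  induction n generalizing f with
  | zero => funext x; simp [iteratedDeriv_zero]
  | succ n ih =>
    rw [iteratedDeriv_succ', iteratedDeriv_succ']
    have : deriv (fun x => -f x) = fun x => -deriv f x := by
      funext x; exact deriv.neg
    rw [this, ih]

end CM14


/-- A function is completely monotone on `(0,∞)` if it is smooth there and
`(-1)^n f^{(n)}(x) ≥ 0` for all `n ≥ 0` and `x > 0`. -/
def CompletelyMonotoneOnPos (f : ℝ → ℝ) : Prop :=
  ContDiffOn ℝ (⊤ : ℕ∞) f (Set.Ioi 0) ∧
  ∀ (n : ℕ) (x : ℝ), 0 < x → 0 ≤ (-1 : ℝ) ^ n * iteratedDeriv n f x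

/-- complete monotonicity claim in Sections 4.3 and 6. -/
theorem completelyMonotone_diagonal (p N D q : ℝ) (hp : 1 < p)
    (hD1 : -1 < D) (hD0 : D ≤ 0) (hNq1 : -1 < N + q) (hNq0 : N + q ≤ 0)
    (hq : 0 ≤ q * (D - N)) :
    CompletelyMonotoneOnPos
      (fun x : ℝ => q * (D - N) / ((p ^ x + D) * (p ^ x + N + q))) ∧
    ∀ (n : ℕ) (x : ℝ), 0 < x →
      0 ≤ (-1 : ℝ) ^ n *
        iteratedDeriv (n + 1)
          (fun x : ℝ => 1 - q * (D - N) / ((p ^ x + D) * (p ^ x + N + q))) x := by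
  have hp0 : (0:ℝ) < p := by linarith
  set g₀ : ℝ → ℝ := fun x : ℝ => q * (D - N) / ((p ^ x + D) * (p ^ x + N + q)) with hg₀
  set s₁ : ℝ := -D with hs₁def
  set s₂ : ℝ := -(N + q) with hs₂def
  have hs₁ : 0 ≤ s₁ := by simp [hs₁def]; linarith
  have hs₁' : s₁ < 1 := by simp [hs₁def]; linarith
  have hs₂ : 0 ≤ s₂ := by simp [hs₂def]; linarith
  have hs₂' : s₂ < 1 := by simp [hs₂def]; linarith
  -- g₀ is in the cone
  have hCone : CM14.Cone p s₁ s₂ g₀ := by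
    have h0 := CM14.Cone.smul (p := p) (s₁ := s₁) (s₂ := s₂) (q * (D - N)) hq
      (CM14.Cone.atom 0 0 0 0 (by omega) (by omega))
    have hfe : (fun x : ℝ => q * (D - N) *
        ((p ^ x) ^ (0 + 0) / ((p ^ x - s₁) ^ (0 + 1) * (p ^ x - s₂) ^ (0 + 1)))) = g₀ := by
      funext x
      rw [hg₀, hs₁def, hs₂def]
      simp only [zero_add, pow_zero, pow_one, sub_neg_eq_add]
      ring
    rw [← hfe]
    exact h0
  -- sign property for g₀
  have hsg : ∀ (n : ℕ) (x : ℝ), 0 < x → 0 ≤ (-1 : ℝ) ^ n * iteratedDeriv n g₀ x := by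
    intro n x hx
    obtain ⟨h, hh, heq⟩ := CM14.cone_iteratedDeriv hp hs₁ hs₁' hs₂ hs₂' hCone n
    rw [heq x hx, ← mul_assoc, ← mul_assoc, ← mul_pow]
    norm_num
    exact mul_nonneg (pow_nonneg (Real.log_nonneg hp.le) n)
      (CM14.cone_nonneg hp hs₁' hs₂' hh x hx)
  -- smoothness
  have hrp : ContDiff ℝ (⊤ : ℕ∞) fun x : ℝ => p ^ x := by
    have : (fun x : ℝ => p ^ x) = fun x => Real.exp (Real.log p * x) := by
      funext x; rw [Real.rpow_def_of_pos hp0]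
    rw [this]
    exact Real.contDiff_exp.comp (contDiff_const.mul contDiff_id)
  have hden : ContDiff ℝ (⊤ : ℕ∞) fun x : ℝ => (p ^ x + D) * (p ^ x + N + q) :=
    ((hrp.add contDiff_const).mul ((hrp.add contDiff_const).add contDiff_const))
  have hpos : ∀ x ∈ Set.Ioi (0:ℝ), (p ^ x + D) * (p ^ x + N + q) ≠ 0 := by
    intro x hx
    have hy := CM14.one_lt_rpow_self hp hx
    have h1 : (0:ℝ) < p ^ x + D := by linarith
    have h2 : (0:ℝ) < p ^ x + N + q := by linarith
    exact ne_of_gt (mul_pos h1 h2)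
  refine ⟨⟨ContDiffOn.div contDiffOn_const hden.contDiffOn hpos, hsg⟩, ?_⟩
  intro n x hx
  have key : iteratedDeriv (n + 1) (fun x : ℝ => 1 - g₀ x) x
      = -iteratedDeriv (n + 1) g₀ x := by
    have h1 : deriv (fun x : ℝ => 1 - g₀ x) = fun x => -deriv g₀ x :=
      funext fun y => deriv_const_sub 1
    conv_lhs => rw [iteratedDeriv_succ']
    rw [h1, CM14.iteratedDeriv_neg'', ← iteratedDeriv_succ']
  have h2 : (fun x : ℝ => 1 - q * (D - N) / ((p ^ x + D) * (p ^ x + N + q)))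
      = fun x : ℝ => 1 - g₀ x := rfl
  rw [h2, key]
  have h3 : (-1 : ℝ) ^ n * -iteratedDeriv (n + 1) g₀ x
      = (-1 : ℝ) ^ (n + 1) * iteratedDeriv (n + 1) g₀ x := by ring
  rw [h3]
  exact hsg (n + 1) x hx
end

section
/- (Sector VIII, first zone; Section 6.) Fix p > 1 and let (N,D) lie in Sector VIII, i.e., −1 < D < N < 0. Then for every (M,P) in the open square (−1,1)×(−1,1) with N ≤ M ≤ −N and P ≤ D, one has (N,D) ≫ (M,P). -/
open MeasureTheory

namespace SectorAux

/-- Integrability of `x ^ n` w.r.t. a finite measure vanishing outside `[0,1]`. -/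
lemma integrable_pow_of_supp (μ : Measure ℝ) [IsFiniteMeasure μ]
    (hs : μ (Set.Icc (0:ℝ) 1)ᶜ = 0) (n : ℕ) :
    Integrable (fun x : ℝ => x ^ n) μ := by
  have hae : ∀ᵐ x ∂μ, x ∈ Set.Icc (0:ℝ) 1 := by
    exact MeasureTheory.mem_ae_iff.mpr hs
  refine (integrable_const (1:ℝ)).mono' ((continuous_pow n).aestronglyMeasurable) ?_
  filter_upwards [hae] with x hx
  rw [Real.norm_eq_abs, abs_pow]
  calc |x| ^ n ≤ 1 ^ n := by
        refine pow_le_pow_left₀ (abs_nonneg x) ?_ n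
        rw [abs_le]; exact ⟨by linarith [hx.1], hx.2⟩
    _ = 1 := one_pow n

/-- A series of weighted Dirac measures realizing prescribed "geometric" moments. -/
lemma diracSeries (c : ℕ → ℝ) (hc : ∀ k, 0 ≤ c k) (hsum : Summable c)
    (r : ℕ → ℝ) (hr : ∀ k, r k ∈ Set.Icc (0:ℝ) 1) :
    ∃ ν : Measure ℝ, IsFiniteMeasure ν ∧ ν (Set.Icc (0:ℝ) 1)ᶜ = 0 ∧
      ∀ n : ℕ, ∫ x, x ^ n ∂ν = ∑' k, c k * (r k) ^ n := by
  set ν : Measure ℝ :=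
    Measure.sum (fun k => ENNReal.ofReal (c k) • Measure.dirac (r k)) with hν
  have hcompl : ν (Set.Icc (0:ℝ) 1)ᶜ = 0 := by
    rw [hν, Measure.sum_apply _ measurableSet_Icc.compl]
    have : ∀ k, (ENNReal.ofReal (c k) • Measure.dirac (r k)) (Set.Icc (0:ℝ) 1)ᶜ = 0 := by
      intro k
      rw [Measure.smul_apply, Measure.dirac_apply' _ measurableSet_Icc.compl]
      rw [Set.indicator_of_notMem (by simp [hr k])]
      simp
    simp [this]
  have hfin : IsFiniteMeasure ν := by
    constructor
    rw [hν, Measure.sum_apply _ MeasurableSet.univ]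
    have : ∀ k, (ENNReal.ofReal (c k) • Measure.dirac (r k)) Set.univ
        = ENNReal.ofReal (c k) := by
      intro k; simp
    rw [tsum_congr this, ← ENNReal.ofReal_tsum_of_nonneg hc hsum]
    exact ENNReal.ofReal_lt_top
  refine ⟨ν, hfin, hcompl, fun n => ?_⟩
  have hint : Integrable (fun x : ℝ => x ^ n) ν := integrable_pow_of_supp ν hcompl n
  rw [hν] at hint ⊢
  rw [integral_sum_measure hint]
  refine tsum_congr fun k => ?_
  rw [integral_smul_measure, integral_dirac, ENNReal.toReal_ofReal (hc k), smul_eq_mul]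

/-- Multiplicative convolution of two measures on `ℝ`. -/
noncomputable def mconv (μ ν : Measure ℝ) : Measure ℝ :=
  (μ.prod ν).map (fun z : ℝ × ℝ => z.1 * z.2)

lemma mconv_univ (μ ν : Measure ℝ) [IsFiniteMeasure μ] [IsFiniteMeasure ν] :
    (mconv μ ν) Set.univ = μ Set.univ * ν Set.univ := by
  rw [mconv, Measure.map_apply (by exact measurable_fst.mul measurable_snd : Measurable (fun z : ℝ × ℝ => z.1 * z.2)) MeasurableSet.univ]
  rw [Set.preimage_univ, ← Set.univ_prod_univ, Measure.prod_prod]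

instance mconv_finite (μ ν : Measure ℝ) [IsFiniteMeasure μ] [IsFiniteMeasure ν] :
    IsFiniteMeasure (mconv μ ν) := by
  constructor
  rw [mconv_univ]
  exact ENNReal.mul_lt_top (measure_lt_top μ _) (measure_lt_top ν _)

lemma mconv_supp (μ ν : Measure ℝ) [IsFiniteMeasure μ] [IsFiniteMeasure ν]
    (hμ : μ (Set.Icc (0:ℝ) 1)ᶜ = 0) (hν : ν (Set.Icc (0:ℝ) 1)ᶜ = 0) :
    (mconv μ ν) (Set.Icc (0:ℝ) 1)ᶜ = 0 := by
  rw [mconv, Measure.map_apply (by exact measurable_fst.mul measurable_snd : Measurable (fun z : ℝ × ℝ => z.1 * z.2)) measurableSet_Icc.compl]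
  have hsub : (fun z : ℝ × ℝ => z.1 * z.2) ⁻¹' (Set.Icc (0:ℝ) 1)ᶜ ⊆
      ((Set.Icc (0:ℝ) 1)ᶜ ×ˢ Set.univ) ∪ (Set.univ ×ˢ (Set.Icc (0:ℝ) 1)ᶜ) := by
    rintro ⟨x, y⟩ hz
    by_contra hcon
    simp only [Set.mem_union, Set.mem_prod, Set.mem_compl_iff, Set.mem_univ, and_true,
      true_and, not_or, not_not] at hcon
    obtain ⟨hx, hy⟩ := hcon
    apply hz
    exact ⟨mul_nonneg hx.1 hy.1, mul_le_one₀ hx.2 hy.1 hy.2⟩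
  refine le_antisymm ?_ zero_le
  calc (μ.prod ν) ((fun z : ℝ × ℝ => z.1 * z.2) ⁻¹' (Set.Icc (0:ℝ) 1)ᶜ)
      ≤ (μ.prod ν) (((Set.Icc (0:ℝ) 1)ᶜ ×ˢ Set.univ) ∪ (Set.univ ×ˢ (Set.Icc (0:ℝ) 1)ᶜ)) :=
        measure_mono hsub
    _ ≤ (μ.prod ν) ((Set.Icc (0:ℝ) 1)ᶜ ×ˢ Set.univ)
        + (μ.prod ν) (Set.univ ×ˢ (Set.Icc (0:ℝ) 1)ᶜ) := measure_union_le _ _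
    _ = 0 := by rw [Measure.prod_prod, Measure.prod_prod, hμ, hν]; simp

lemma mconv_moment (μ ν : Measure ℝ) [IsFiniteMeasure μ] [IsFiniteMeasure ν] (n : ℕ) :
    ∫ x, x ^ n ∂(mconv μ ν) = (∫ x, x ^ n ∂μ) * ∫ x, x ^ n ∂ν := by
  rw [mconv, integral_map (by exact measurable_fst.mul measurable_snd : Measurable (fun z : ℝ × ℝ => z.1 * z.2)).aemeasurable
    ((continuous_pow n).aestronglyMeasurable)]
  simp_rw [mul_pow]
  exact integral_prod_mul (fun x : ℝ => x ^ n) (fun x : ℝ => x ^ n)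

/-- `j`-fold multiplicative convolution power. -/
noncomputable def mpow (ν : Measure ℝ) : ℕ → Measure ℝ
  | 0 => Measure.dirac 1
  | (j+1) => mconv ν (mpow ν j)

instance mpow_finite (ν : Measure ℝ) [IsFiniteMeasure ν] (j : ℕ) :
    IsFiniteMeasure (mpow ν j) := by
  induction j with
  | zero => rw [mpow]; infer_instance
  | succ j ih => rw [mpow]; exact mconv_finite ν (mpow ν j)

lemma mpow_supp (ν : Measure ℝ) [IsFiniteMeasure ν]
    (hν : ν (Set.Icc (0:ℝ) 1)ᶜ = 0) (j : ℕ) :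
    (mpow ν j) (Set.Icc (0:ℝ) 1)ᶜ = 0 := by
  induction j with
  | zero =>
      rw [mpow, Measure.dirac_apply' _ measurableSet_Icc.compl]
      rw [Set.indicator_of_notMem (by norm_num)]
  | succ j ih => rw [mpow]; exact mconv_supp ν (mpow ν j) hν ih

lemma mpow_moment (ν : Measure ℝ) [IsFiniteMeasure ν] (j n : ℕ) :
    ∫ x, x ^ n ∂(mpow ν j) = (∫ x, x ^ n ∂ν) ^ j := by
  induction j with
  | zero => rw [mpow, integral_dirac]; simp
  | succ j ih => rw [mpow, mconv_moment, ih, pow_succ]; ring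

lemma mpow_univ (ν : Measure ℝ) [IsFiniteMeasure ν] (j : ℕ) :
    (mpow ν j) Set.univ = (ν Set.univ) ^ j := by
  induction j with
  | zero => rw [mpow]; simp
  | succ j ih => rw [mpow, mconv_univ, ih, pow_succ]; ring

/-- The "exponential" of a finite measure supported on `[0,1]` (normalized),
whose moments are `exp (∫x^n dν - ν(ℝ))`. -/
lemma exp_measure (ν : Measure ℝ) [IsFiniteMeasure ν]
    (hsupp : ν (Set.Icc (0:ℝ) 1)ᶜ = 0) :
    ∃ μ : Measure ℝ, IsFiniteMeasure μ ∧ μ (Set.Icc (0:ℝ) 1)ᶜ = 0 ∧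
      ∀ n : ℕ, ∫ x, x ^ n ∂μ =
        Real.exp ((∫ x, x ^ n ∂ν) - (ν Set.univ).toReal) := by
  set g1 : ℝ := (ν Set.univ).toReal with hg1
  have hg1nn : 0 ≤ g1 := ENNReal.toReal_nonneg
  set μ : Measure ℝ :=
    Measure.sum (fun j : ℕ =>
      ENNReal.ofReal (Real.exp (-g1) / j.factorial) • mpow ν j) with hμ
  have hcnn : ∀ j : ℕ, 0 ≤ Real.exp (-g1) / j.factorial := fun j =>
    div_nonneg (Real.exp_pos _).le (by positivity)
  have hcompl : μ (Set.Icc (0:ℝ) 1)ᶜ = 0 := by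
    rw [hμ, Measure.sum_apply _ measurableSet_Icc.compl]
    have : ∀ j : ℕ, (ENNReal.ofReal (Real.exp (-g1) / j.factorial) • mpow ν j)
        (Set.Icc (0:ℝ) 1)ᶜ = 0 := by
      intro j
      rw [Measure.smul_apply, mpow_supp ν hsupp j]
      simp
    simp [this]
  have hνuniv : ν Set.univ = ENNReal.ofReal g1 :=
    (ENNReal.ofReal_toReal (measure_ne_top ν _)).symm
  have hsummable : Summable (fun j : ℕ => Real.exp (-g1) / j.factorial * g1 ^ j) := by
    have := (Real.summable_pow_div_factorial g1).mul_left (Real.exp (-g1))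
    exact this.congr (fun j => by ring)
  have hfin : IsFiniteMeasure μ := by
    constructor
    rw [hμ, Measure.sum_apply _ MeasurableSet.univ]
    have hterm : ∀ j : ℕ, (ENNReal.ofReal (Real.exp (-g1) / j.factorial) • mpow ν j)
        Set.univ = ENNReal.ofReal (Real.exp (-g1) / j.factorial * g1 ^ j) := by
      intro j
      rw [Measure.smul_apply, mpow_univ, hνuniv, smul_eq_mul,
        ← ENNReal.ofReal_pow hg1nn, ← ENNReal.ofReal_mul (hcnn j)]
    rw [tsum_congr hterm,
      ← ENNReal.ofReal_tsum_of_nonneg (fun j => by positivity) hsummable]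
    exact ENNReal.ofReal_lt_top
  refine ⟨μ, hfin, hcompl, fun n => ?_⟩
  have hint : Integrable (fun x : ℝ => x ^ n) μ := by
    have := hfin
    exact integrable_pow_of_supp μ hcompl n
  rw [hμ] at hint ⊢
  rw [integral_sum_measure hint]
  have hterm : ∀ j : ℕ, ∫ x, x ^ n
      ∂(ENNReal.ofReal (Real.exp (-g1) / j.factorial) • mpow ν j)
      = Real.exp (-g1) / j.factorial * (∫ x, x ^ n ∂ν) ^ j := by
    intro j
    rw [integral_smul_measure, mpow_moment, ENNReal.toReal_ofReal (hcnn j), smul_eq_mul]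
  rw [tsum_congr hterm]
  set G : ℝ := ∫ x, x ^ n ∂ν
  have : (fun j : ℕ => Real.exp (-g1) / j.factorial * G ^ j)
      = fun j : ℕ => Real.exp (-g1) * (G ^ j / j.factorial) := by
    funext j; ring
  rw [this, tsum_mul_left]
  have hexp : ∑' j : ℕ, G ^ j / (j.factorial : ℝ) = Real.exp G := by
    rw [Real.exp_eq_exp_ℝ, NormedSpace.exp_eq_tsum_div]
  rw [hexp, ← Real.exp_add]
  ring_nf

lemma le_one_of_sq_le_one {v : ℝ} (h0 : 0 < v) (h : v ^ 2 ≤ 1) : v ≤ 1 := by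
  nlinarith

lemma hasSum_log_one_add {t : ℝ} (h : |t| < 1) :
    HasSum (fun m : ℕ => -((-t) ^ (m + 1) / (m + 1))) (Real.log (1 + t)) := by
  have h' : |(-t)| < 1 := by rwa [abs_neg]
  have h2 := (Real.hasSum_pow_div_log_of_abs_lt_one h').neg
  simpa [sub_neg_eq_add] using h2

end SectorAux

/-- Sector VIII, first zone; Section 6. -/
theorem sectorVIII_first_zone (p N D : ℝ) (hp : 1 < p)
    (hD1 : -1 < D) (hDN : D < N) (hN0 : N < 0) :
    ∀ M P : ℝ, -1 < M → M < 1 → -1 < P → P < 1 →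
      N ≤ M → M ≤ -N → P ≤ D → MIDSubord p N D M P := by
  intro M P hM1 hM1' hP1 hP1' hNM hMN hPD
  unfold MIDSubord IsMIDWeight IsSubnormalWeight
  intro s hs
  have hp0 : (0:ℝ) < p := lt_trans one_pos hp
  set q : ℝ := p⁻¹ with hqdef
  have hq0 : 0 < q := inv_pos.mpr hp0
  have hq1 : q < 1 := by
    rw [hqdef, inv_lt_one_iff₀]; right; exact hp
  have hpq : ∀ j : ℕ, p ^ j * q ^ j = 1 := by
    intro j; rw [← mul_pow, mul_inv_cancel₀ hp0.ne', one_pow]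
  have hqj1 : ∀ j : ℕ, q ^ j ≤ 1 := fun j => pow_le_one₀ hq0.le hq1.le
  have hqj0 : ∀ j : ℕ, 0 < q ^ j := fun j => pow_pos hq0 j
  have hpj1 : ∀ j : ℕ, 1 ≤ p ^ j := fun j => one_le_pow₀ hp.le
  -- positivity of the four shifted powers
  have hN1 : -1 < N := lt_trans hD1 hDN
  have hposN : ∀ j : ℕ, 0 < p ^ j + N := fun j => by linarith [hpj1 j]
  have hposD : ∀ j : ℕ, 0 < p ^ j + D := fun j => by linarith [hpj1 j]
  have hposM : ∀ j : ℕ, 0 < p ^ j + M := fun j => by linarith [hpj1 j]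
  have hposP : ∀ j : ℕ, 0 < p ^ j + P := fun j => by linarith [hpj1 j]
  -- the log expansions
  have habs : ∀ (X : ℝ), -1 < X → X < 1 → ∀ j : ℕ, |X * q ^ j| < 1 := by
    intro X h1 h2 j
    rw [abs_mul, abs_of_pos (hqj0 j)]
    calc |X| * q ^ j ≤ |X| * 1 := by
          exact mul_le_mul_of_nonneg_left (hqj1 j) (abs_nonneg X)
      _ = |X| := mul_one _
      _ < 1 := abs_lt.mpr ⟨h1, h2⟩
  have hlogsplit : ∀ (X : ℝ), -1 < X → X < 1 → ∀ j : ℕ,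
      Real.log (p ^ j + X) = Real.log (p ^ j) + Real.log (1 + X * q ^ j) := by
    intro X h1 h2 j
    have h3 : p ^ j + X = p ^ j * (1 + X * q ^ j) := by
      have := hpq j; nlinarith [hpq j]
    rw [h3, Real.log_mul (pow_pos hp0 j).ne' ?_]
    have := habs X h1 h2 j
    rw [abs_lt] at this
    nlinarith [this.1]
  set L : ℕ → ℝ := fun j =>
    Real.log (((p ^ j + N) / (p ^ j + D)) / ((p ^ j + M) / (p ^ j + P))) with hLdef
  have hLsplit : ∀ j : ℕ, L j =
      Real.log (1 + N * q ^ j) - Real.log (1 + D * q ^ j)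
        - (Real.log (1 + M * q ^ j) - Real.log (1 + P * q ^ j)) := by
    intro j
    rw [hLdef]
    simp only
    rw [Real.log_div (div_pos (hposN j) (hposD j)).ne' (div_pos (hposM j) (hposP j)).ne',
      Real.log_div (hposN j).ne' (hposD j).ne', Real.log_div (hposM j).ne' (hposP j).ne',
      hlogsplit N hN1 (by linarith) j, hlogsplit D hD1 (by linarith) j,
      hlogsplit M hM1 hM1' j, hlogsplit P hP1 hP1' j]
    ring
  set A : ℕ → ℝ := fun m =>
    ((-D) ^ (m + 1) + (-M) ^ (m + 1) - (-N) ^ (m + 1) - (-P) ^ (m + 1)) / (m + 1) with hAdef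
  have hL_hasSum : ∀ j : ℕ, HasSum (fun m : ℕ => A m * (q ^ (m + 1)) ^ j) (L j) := by
    intro j
    have eN := SectorAux.hasSum_log_one_add (habs N hN1 (by linarith) j)
    have eD := SectorAux.hasSum_log_one_add (habs D hD1 (by linarith) j)
    have eM := SectorAux.hasSum_log_one_add (habs M hM1 hM1' j)
    have eP := SectorAux.hasSum_log_one_add (habs P hP1 hP1' j)
    have comb := (eN.sub eD).sub (eM.sub eP)
    rw [← hLsplit j] at comb
    refine HasSum.congr_fun comb ?_
    intro m
    have hx : ∀ X : ℝ, (-(X * q ^ j)) ^ (m + 1) = (-X) ^ (m + 1) * (q ^ (m + 1)) ^ j := by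
      intro X
      rw [show -(X * q ^ j) = (-X) * q ^ j by ring, mul_pow, ← pow_mul, ← pow_mul,
        Nat.mul_comm]
    rw [hx N, hx D, hx M, hx P, hAdef]
    have hm1 : ((m : ℝ) + 1) ≠ 0 := by positivity
    field_simp
    ring
  -- sign and size of the coefficients A
  have hDP : 0 ≤ -D := by linarith
  have hMabs : |M| ≤ -N := abs_le.mpr ⟨by linarith, hMN⟩
  have hkey : ∀ m : ℕ, (-D) ^ (m + 1) ≤ (-P) ^ (m + 1) ∧ (-M) ^ (m + 1) ≤ (-N) ^ (m + 1) := by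
    intro m
    constructor
    · exact pow_le_pow_left₀ hDP (by linarith) (m + 1)
    · calc (-M) ^ (m + 1) ≤ |(-M) ^ (m + 1)| := le_abs_self _
        _ = |M| ^ (m + 1) := by rw [abs_pow, abs_neg]
        _ ≤ (-N) ^ (m + 1) := pow_le_pow_left₀ (abs_nonneg M) hMabs (m + 1)
  have hA_nonpos : ∀ m : ℕ, A m ≤ 0 := by
    intro m
    have h := hkey m
    rw [hAdef]
    apply div_nonpos_of_nonpos_of_nonneg
    · linarith [h.1, h.2]
    · positivity
  set ρ : ℝ := max (-N) (-P) with hρdef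
  have hρ0 : 0 ≤ ρ := le_trans (by linarith) (le_max_left _ _)
  have hρ1 : ρ < 1 := max_lt (by linarith) (by linarith)
  have hA_bound : ∀ m : ℕ, -(A m) ≤ 4 * ρ ^ (m + 1) := by
    intro m
    have hN' : (-N) ^ (m + 1) ≤ ρ ^ (m + 1) :=
      pow_le_pow_left₀ (by linarith) (le_max_left _ _) (m + 1)
    have hP' : (-P) ^ (m + 1) ≤ ρ ^ (m + 1) :=
      pow_le_pow_left₀ (by linarith) (le_max_right _ _) (m + 1)
    have hD' : (0:ℝ) ≤ (-D) ^ (m + 1) := pow_nonneg hDP (m + 1)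
    have hM' : -((-M) ^ (m + 1)) ≤ ρ ^ (m + 1) := by
      calc -((-M) ^ (m + 1)) ≤ |(-M) ^ (m + 1)| := neg_le_abs _
        _ = |M| ^ (m + 1) := by rw [abs_pow, abs_neg]
        _ ≤ (-N) ^ (m + 1) := pow_le_pow_left₀ (abs_nonneg M) hMabs (m + 1)
        _ ≤ ρ ^ (m + 1) := hN'
    have hρp : (0:ℝ) ≤ ρ ^ (m + 1) := pow_nonneg hρ0 _
    have hnum : (-N) ^ (m + 1) + (-P) ^ (m + 1) - (-D) ^ (m + 1) - (-M) ^ (m + 1)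
        ≤ 4 * ρ ^ (m + 1) := by linarith
    have hnum0 : 0 ≤ (-N) ^ (m + 1) + (-P) ^ (m + 1) - (-D) ^ (m + 1) - (-M) ^ (m + 1) := by
      have h := hkey m; linarith [h.1, h.2]
    have hAeq : -(A m) = ((-N) ^ (m + 1) + (-P) ^ (m + 1) - (-D) ^ (m + 1)
        - (-M) ^ (m + 1)) / (m + 1) := by
      rw [hAdef]; ring
    rw [hAeq]
    calc ((-N) ^ (m + 1) + (-P) ^ (m + 1) - (-D) ^ (m + 1) - (-M) ^ (m + 1)) / (m + 1)
        ≤ ((-N) ^ (m + 1) + (-P) ^ (m + 1) - (-D) ^ (m + 1) - (-M) ^ (m + 1)) :=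
          div_le_self hnum0 (by push_cast; linarith [Nat.cast_nonneg (α := ℝ) m])
      _ ≤ 4 * ρ ^ (m + 1) := hnum
  -- the nonnegative coefficients u
  have hden : ∀ m : ℕ, 0 < 1 - q ^ (m + 1) := by
    intro m
    have : q ^ (m + 1) < 1 := pow_lt_one₀ hq0.le hq1 (Nat.succ_ne_zero m)
    linarith
  set u : ℕ → ℝ := fun m => s * (-(A m)) / (1 - q ^ (m + 1)) with hudef
  have hu_nonneg : ∀ m : ℕ, 0 ≤ u m := by
    intro m
    apply div_nonneg _ (hden m).le
    have := hA_nonpos m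
    nlinarith
  have hu_le : ∀ m : ℕ, u m ≤ (s * 4 / (1 - q) * ρ) * ρ ^ m := by
    intro m
    have h1 : 1 - q ≤ 1 - q ^ (m + 1) := by
      have h := pow_le_pow_of_le_one hq0.le hq1.le (show 1 ≤ m + 1 by omega)
      rw [pow_one] at h
      linarith
    have h2 : s * (-(A m)) ≤ s * (4 * ρ ^ (m + 1)) :=
      mul_le_mul_of_nonneg_left (hA_bound m) hs.le
    have h3 : u m ≤ s * (4 * ρ ^ (m + 1)) / (1 - q) := by
      rw [hudef]
      refine div_le_div₀ (by positivity) h2 (by linarith) h1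
    calc u m ≤ s * (4 * ρ ^ (m + 1)) / (1 - q) := h3
      _ = (s * 4 / (1 - q) * ρ) * ρ ^ m := by rw [pow_succ]; ring
  have hu_summable : Summable u := by
    refine Summable.of_nonneg_of_le hu_nonneg hu_le ?_
    exact (summable_geometric_of_lt_one hρ0 hρ1).mul_left _
  set g1 : ℝ := ∑' m, u m with hg1def
  have hg1_hasSum : HasSum u g1 := hu_summable.hasSum
  -- the moment identity as a HasSum
  have hGn : ∀ n : ℕ, HasSum (fun m : ℕ => u m * (q ^ (m + 1)) ^ n)
      (s * ∑ j ∈ Finset.range n, L j + g1) := by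
    intro n
    have hsum1 : HasSum (fun m : ℕ => ∑ j ∈ Finset.range n, A m * (q ^ (m + 1)) ^ j)
        (∑ j ∈ Finset.range n, L j) :=
      hasSum_sum (fun j _ => hL_hasSum j)
    have hgeom : ∀ m : ℕ, ∑ j ∈ Finset.range n, A m * (q ^ (m + 1)) ^ j
        = A m * (((q ^ (m + 1)) ^ n - 1) / (q ^ (m + 1) - 1)) := by
      intro m
      rw [← Finset.mul_sum, geom_sum_eq (by linarith [hden m] : q ^ (m+1) ≠ 1)]
    have key : ∀ a t : ℝ, t < 1 →
        s * (a * ((t ^ n - 1) / (t - 1))) = s * -a / (1 - t) * t ^ n - s * -a / (1 - t) := by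
      intro a t ht
      have h1 : t - 1 ≠ 0 := by linarith
      have h2 : 1 - t ≠ 0 := by linarith
      field_simp
      ring
    have hsum2 : HasSum (fun m : ℕ => u m * (q ^ (m + 1)) ^ n - u m)
        (s * ∑ j ∈ Finset.range n, L j) := by
      have := (hsum1.mul_left s)
      refine HasSum.congr_fun this ?_
      intro m
      rw [hgeom m]
      exact (key (A m) (q ^ (m + 1)) (by linarith [hden m])).symm
    have := hsum2.add hg1_hasSum
    refine HasSum.congr_fun this ?_
    intro m
    ring
  -- the representing measures
  obtain ⟨ν, hνfin, hνsupp, hνmom⟩ := SectorAux.diracSeries u hu_nonneg hu_summable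
      (fun k => q ^ (k + 1)) (fun k => ⟨(hqj0 (k + 1)).le, hqj1 (k + 1)⟩)
  haveI := hνfin
  have hνuniv : (ν Set.univ).toReal = g1 := by
    have h0 := hνmom 0
    simp only [pow_zero, mul_one] at h0
    rw [integral_const, smul_eq_mul, mul_one] at h0
    exact h0.trans hg1def.symm
  obtain ⟨μ, hμfin, hμsupp, hμmom⟩ := SectorAux.exp_measure ν hνsupp
  -- the weight sequence
  have hw_pos : ∀ n : ℕ, 0 < grws p N D n / grws p M P n := by
    intro n
    exact div_pos (Real.sqrt_pos.mpr (div_pos (hposN n) (hposD n)))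
      (Real.sqrt_pos.mpr (div_pos (hposM n) (hposP n)))
  have hfactor : ∀ j : ℕ, ((grws p N D j / grws p M P j) ^ s) ^ 2 = Real.exp (s * L j) := by
    intro j
    have ha : (0:ℝ) < (p ^ j + N) / (p ^ j + D) := div_pos (hposN j) (hposD j)
    have hb : (0:ℝ) < (p ^ j + M) / (p ^ j + P) := div_pos (hposM j) (hposP j)
    have hwsq : (grws p N D j / grws p M P j) ^ (2:ℕ)
        = ((p ^ j + N) / (p ^ j + D)) / ((p ^ j + M) / (p ^ j + P)) := by
      rw [grws, grws, div_pow, Real.sq_sqrt ha.le, Real.sq_sqrt hb.le]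
    have hR : (0:ℝ) < ((p ^ j + N) / (p ^ j + D)) / ((p ^ j + M) / (p ^ j + P)) :=
      div_pos ha hb
    have h2 : ((grws p N D j / grws p M P j) ^ s) ^ (2:ℕ)
        = ((grws p N D j / grws p M P j) ^ (2:ℕ)) ^ s := by
      rw [← Real.rpow_natCast ((grws p N D j / grws p M P j) ^ s) 2,
        ← Real.rpow_natCast (grws p N D j / grws p M P j) 2,
        ← Real.rpow_mul (hw_pos j).le, ← Real.rpow_mul (hw_pos j).le, mul_comm]
    rw [h2, hwsq, Real.rpow_def_of_pos hR]
    rw [hLdef]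
    ring_nf
  have hmoments : ∀ n : ℕ,
      moments (fun k => (grws p N D k / grws p M P k) ^ s) n
        = Real.exp (s * ∑ j ∈ Finset.range n, L j) := by
    intro n
    rw [moments]
    calc ∏ j ∈ Finset.range n, ((grws p N D j / grws p M P j) ^ s) ^ 2
        = ∏ j ∈ Finset.range n, Real.exp (s * L j) :=
          Finset.prod_congr rfl (fun j _ => hfactor j)
      _ = Real.exp (∑ j ∈ Finset.range n, s * L j) := (Real.exp_sum _ _).symm
      _ = Real.exp (s * ∑ j ∈ Finset.range n, L j) := by rw [Finset.mul_sum]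
  refine ⟨fun n => Real.rpow_pos_of_pos (hw_pos n) s, ⟨1, ?_⟩,
    μ, hμfin, ⟨Set.Icc 0 1, isCompact_Icc, fun x hx => hx.1, hμsupp⟩, ?_⟩
  · intro n
    have hLneg : L n ≤ 0 := by
      refine hasSum_le (fun m => ?_) (hL_hasSum n) hasSum_zero
      have h2 : 0 ≤ (-(A m)) * (q ^ (m + 1)) ^ n :=
        mul_nonneg (by linarith [hA_nonpos m]) (pow_nonneg (pow_nonneg hq0.le _) n)
      linarith
    have hexp1 : ((grws p N D n / grws p M P n) ^ s) ^ 2 ≤ 1 := by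
      rw [hfactor n]
      rw [Real.exp_le_one_iff]
      exact mul_nonpos_iff.mpr (Or.inl ⟨hs.le, hLneg⟩)
    exact SectorAux.le_one_of_sq_le_one (Real.rpow_pos_of_pos (hw_pos n) s) hexp1
  · intro n
    rw [hmoments n, hμmom n, hνmom n, (hGn n).tsum_eq, hνuniv]
    congr 1
    ring
end

section
/- (Sector VIII, diagonal segment below; Section 6.) Fix p > 1 and let (N,D) lie in Sector VIII, i.e., −1 < D < N < 0. Then for every q with −1 − N < q < 0 and D + q > −1, one has (N,D) ≫ (N + q, D + q). -/
open MeasureTheory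

noncomputable def ccc (a b r : ℝ) (m : ℕ) : ℝ := ((b+r)^m - b^m) - ((a+r)^m - a^m)

noncomputable def bet (t a b r s : ℝ) (m : ℕ) : ℝ :=
  s * ccc a b r (m+1) / (((m:ℝ)+1) * (1 - t^(m+1)))

noncomputable def LL (t a b r s z : ℝ) : ℝ := ∑' m : ℕ, bet t a b r s m * z^(m+1)

noncomputable def WW (t a b r : ℝ) (n : ℕ) : ℝ :=
  ((1 - a*t^n)*(1-(b+r)*t^n)) / ((1-b*t^n)*(1-(a+r)*t^n))

structure GH (t a b r s : ℝ) : Prop where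
  ht0 : 0 < t
  ht1 : t < 1
  ha : 0 < a
  hab : a < b
  hr : 0 < r
  hbr1 : b + r < 1
  hs : 0 < s

lemma ccc_nonneg {a b r : ℝ} (ha : 0 ≤ a) (hab : a ≤ b) (hr : 0 ≤ r) (m : ℕ) :
    0 ≤ ccc a b r m := by
  have key : ∀ c : ℝ, (c+r)^m - c^m = (∑ i ∈ Finset.range m, (c+r)^i * c^(m-1-i)) * r := by
    intro c
    have h := geom_sum₂_mul (c+r) c m
    rw [add_sub_cancel_left] at h
    exact h.symm
  rw [ccc, key b, key a, sub_nonneg]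
  apply mul_le_mul_of_nonneg_right _ hr
  apply Finset.sum_le_sum
  intro i _
  gcongr
  all_goals first | exact pow_nonneg (by linarith) _ | linarith

lemma ccc_le {a b r : ℝ} (ha : 0 ≤ a) (hab : a ≤ b) (hr : 0 ≤ r) (m : ℕ) :
    ccc a b r m ≤ 2 * (b+r)^m := by
  have h1 : a ^ m ≤ (b+r)^m := by
    gcongr
    all_goals linarith
  have h2 : (0:ℝ) ≤ b ^ m := pow_nonneg (by linarith) _
  have h3 : (0:ℝ) ≤ (a+r) ^ m := pow_nonneg (by linarith) _
  rw [ccc]; nlinarith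

namespace GH
variable {t a b r s : ℝ} (h : GH t a b r s)
include h

lemma hb0 : 0 < b := h.ha.trans h.hab
lemma hbr0 : 0 < b + r := by have := h.hb0; have := h.hr; linarith
lemma ha1 : a < 1 := by have := h.hab; have := h.hr; have := h.hbr1; linarith
lemma hb1 : b < 1 := by have := h.hr; have := h.hbr1; linarith
lemma har1 : a + r < 1 := by have := h.hab; have := h.hbr1; linarith
lemma har0 : 0 < a + r := by have := h.ha; have := h.hr; linarith

lemma htpow0 (n : ℕ) : 0 < t ^ n := pow_pos h.ht0 n
lemma htpow1 (n : ℕ) : t ^ n ≤ 1 := pow_le_one₀ h.ht0.le h.ht1.le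

omit h in
lemma one_sub_pos {c T : ℝ} (hc0 : 0 ≤ c) (hc1 : c < 1) (hT0 : 0 ≤ T) (hT1 : T ≤ 1) :
    0 < 1 - c * T := by nlinarith

lemma bet_nonneg (m : ℕ) : 0 ≤ bet t a b r s m := by
  apply div_nonneg
  · exact mul_nonneg h.hs.le (ccc_nonneg h.ha.le h.hab.le h.hr.le _)
  · have h1 : t ^ (m+1) ≤ 1 := h.htpow1 _
    exact mul_nonneg (by positivity) (by linarith)

lemma bet_le (m : ℕ) : bet t a b r s m ≤ (2*s/(1-t)) * (b+r)^(m+1) := by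
  have hD : (1 - t) ≤ ((m:ℝ)+1) * (1 - t^(m+1)) := by
    have h1 : t ^ (m+1) ≤ t := pow_le_of_le_one h.ht0.le h.ht1.le (Nat.succ_ne_zero m)
    have h2 : (1:ℝ) ≤ (m:ℝ)+1 := by have := Nat.cast_nonneg (α := ℝ) m; linarith
    nlinarith [h.ht1]
  have ht1 : (0:ℝ) < 1 - t := by have := h.ht1; linarith
  have h1 : s * ccc a b r (m+1) ≤ s * (2*(b+r)^(m+1)) :=
    mul_le_mul_of_nonneg_left (ccc_le h.ha.le h.hab.le h.hr.le _) h.hs.le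
  calc bet t a b r s m ≤ s * (2*(b+r)^(m+1)) / (1-t) := by
        rw [bet]
        have h0 : 0 ≤ s * (2*(b+r)^(m+1)) := by
          have := pow_nonneg h.hbr0.le (m+1)
          have := h.hs.le
          nlinarith
        exact div_le_div₀ h0 h1 ht1 hD
    _ = (2*s/(1-t)) * (b+r)^(m+1) := by ring

lemma summable_bet_mul {z : ℝ} (hz0 : 0 ≤ z) (hz1 : z ≤ 1) :
    Summable (fun m : ℕ => bet t a b r s m * z ^ (m+1)) := by
  have hρ0 : (0:ℝ) ≤ b + r := h.hbr0.le
  have hgeo : Summable (fun m : ℕ => (2*s/(1-t)) * ((b+r)^m * (b+r))) :=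
    (((summable_geometric_of_lt_one hρ0 h.hbr1).mul_right (b+r)).mul_left (2*s/(1-t)))
  apply Summable.of_nonneg_of_le
    (fun m => mul_nonneg (h.bet_nonneg m) (pow_nonneg hz0 _)) (fun m => ?_)
    (by simpa [pow_succ] using hgeo)
  calc bet t a b r s m * z ^ (m+1) ≤ bet t a b r s m * 1 := by
        have h1 : z ^ (m+1) ≤ 1 := pow_le_one₀ hz0 hz1
        nlinarith [h.bet_nonneg m, pow_nonneg hz0 (m+1)]
    _ ≤ (2*s/(1-t)) * (b+r)^(m+1) := by simpa using h.bet_le m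

lemma LL_nonneg {z : ℝ} (hz0 : 0 ≤ z) : 0 ≤ LL t a b r s z :=
  tsum_nonneg (fun m => mul_nonneg (h.bet_nonneg m) (pow_nonneg hz0 _))

end GH

namespace GH
variable {t a b r s : ℝ} (h : GH t a b r s)
include h

lemma WW_pos (n : ℕ) : 0 < WW t a b r n := by
  have hT0 := (h.htpow0 n).le
  have hT1 := h.htpow1 n
  have h1 := one_sub_pos h.ha.le h.ha1 hT0 hT1
  have h2 := one_sub_pos h.hbr0.le h.hbr1 hT0 hT1
  have h3 := one_sub_pos h.hb0.le h.hb1 hT0 hT1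
  have h4 := one_sub_pos h.har0.le h.har1 hT0 hT1
  rw [WW]
  positivity

lemma WW_le_one (n : ℕ) : WW t a b r n ≤ 1 := by
  have hT0 := (h.htpow0 n).le
  have hT1 := h.htpow1 n
  have h3 := one_sub_pos h.hb0.le h.hb1 hT0 hT1
  have h4 := one_sub_pos h.har0.le h.har1 hT0 hT1
  rw [WW, div_le_one (by positivity)]
  have hba := h.hab
  have hr := h.hr
  nlinarith [mul_nonneg (mul_nonneg hr.le (sub_pos.2 hba).le) (sq_nonneg (t^n))]

omit h in
lemma hasSum_neg_log_one_sub {c T : ℝ} (hc0 : 0 ≤ c) (hc1 : c < 1) (hT0 : 0 ≤ T) (hT1 : T ≤ 1) :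
    HasSum (fun m : ℕ => c ^ (m+1) * T ^ (m+1) / ((m:ℝ)+1)) (-Real.log (1 - c * T)) := by
  have habs : |c * T| < 1 := by
    rw [abs_of_nonneg (mul_nonneg hc0 hT0)]
    nlinarith
  simpa [mul_pow] using Real.hasSum_pow_div_log_of_abs_lt_one habs

lemma hasSum_log_WW (j : ℕ) :
    HasSum (fun m : ℕ => -(ccc a b r (m+1) / ((m:ℝ)+1)) * (t ^ (m+1)) ^ j)
      (Real.log (WW t a b r j)) := by
  have hT0 := (h.htpow0 j).le
  have hT1 := h.htpow1 j
  have p1 := one_sub_pos h.ha.le h.ha1 hT0 hT1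
  have p2 := one_sub_pos h.hbr0.le h.hbr1 hT0 hT1
  have p3 := one_sub_pos h.hb0.le h.hb1 hT0 hT1
  have p4 := one_sub_pos h.har0.le h.har1 hT0 hT1
  have h1 := hasSum_neg_log_one_sub h.hb0.le h.hb1 hT0 hT1
  have h2 := hasSum_neg_log_one_sub h.har0.le h.har1 hT0 hT1
  have h3 := hasSum_neg_log_one_sub h.ha.le h.ha1 hT0 hT1
  have h4 := hasSum_neg_log_one_sub h.hbr0.le h.hbr1 hT0 hT1
  have H := (h1.add h2).sub (h3.add h4)
  convert H using 1
  · rfl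
  · funext m
    rw [ccc, ← pow_right_comm]
    ring
  · rw [WW, Real.log_div (by positivity) (by positivity),
      Real.log_mul (by positivity) (by positivity),
      Real.log_mul (by positivity) (by positivity)]
    ring

lemma sum_log_WW (n : ℕ) :
    s * ∑ j ∈ Finset.range n, Real.log (WW t a b r j)
      = LL t a b r s (t^n) - LL t a b r s 1 := by
  have H : HasSum
      (fun m : ℕ => ∑ j ∈ Finset.range n, -(ccc a b r (m+1) / ((m:ℝ)+1)) * (t ^ (m+1)) ^ j)
      (∑ j ∈ Finset.range n, Real.log (WW t a b r j)) :=
    hasSum_sum (fun j _ => h.hasSum_log_WW j)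
  have H2 : HasSum (fun m : ℕ => bet t a b r s m * (t^n)^(m+1) - bet t a b r s m * 1^(m+1))
      (s * ∑ j ∈ Finset.range n, Real.log (WW t a b r j)) := by
    have Hs := H.mul_left s
    convert Hs using 1
    · rfl
    funext m
    rw [← Finset.mul_sum]
    have hu1 : t^(m+1) < 1 := by
      have := pow_le_of_le_one h.ht0.le h.ht1.le (by omega : m+1 ≠ 0)
      have := h.ht1; linarith
    rw [geom_sum_eq hu1.ne n, bet, pow_right_comm t n (m+1)]
    have hm0 : ((m:ℝ)+1) ≠ 0 := by positivity
    have hd1 : (1 : ℝ) - t^(m+1) ≠ 0 := by linarith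
    have hd2 : t^(m+1) - (1:ℝ) ≠ 0 := by intro hc; apply hd1; linarith
    field_simp
    ring
  have S1 : Summable (fun m : ℕ => bet t a b r s m * (t^n)^(m+1)) :=
    h.summable_bet_mul (h.htpow0 n).le (h.htpow1 n)
  have S2 : Summable (fun m : ℕ => bet t a b r s m * (1:ℝ)^(m+1)) :=
    h.summable_bet_mul zero_le_one le_rfl
  exact H2.unique (S1.hasSum.sub S2.hasSum)

end GH

lemma real_exp_tsum (x : ℝ) : Real.exp x = ∑' n : ℕ, x ^ n / (Nat.factorial n) := by
  rw [Real.exp_eq_exp_ℝ, NormedSpace.exp_eq_tsum_div]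

lemma sq_rpow {x : ℝ} (hx : 0 < x) (s : ℝ) :
    (Real.sqrt x ^ s) ^ 2 = Real.exp (s * Real.log x) := by
  have hy : 0 < Real.sqrt x := Real.sqrt_pos.2 hx
  rw [pow_two, ← Real.rpow_add hy, Real.rpow_def_of_pos hy, Real.log_sqrt hx.le]
  ring_nf

namespace GH
variable {t a b r s : ℝ} (h : GH t a b r s)
include h

lemma moments_eq (n : ℕ) :
    moments (fun k => Real.sqrt (WW t a b r k) ^ s) n
      = Real.exp (LL t a b r s (t^n) - LL t a b r s 1) := by
  rw [← h.sum_log_WW n, moments, Finset.mul_sum, Real.exp_sum]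
  exact Finset.prod_congr rfl fun j _ => by rw [sq_rpow (h.WW_pos j) s]

end GH

lemma tsum_pow_aux (f : ℕ → ENNReal) (j : ℕ) :
    ∑' v : Fin j → ℕ, ∏ k, f (v k) = (∑' m, f m) ^ j := by
  induction j with
  | zero =>
    rw [tsum_eq_single (default : Fin 0 → ℕ) (fun b hb => absurd (Subsingleton.elim b default) hb)]
    simp
  | succ j ih =>
    rw [← (Fin.consEquiv fun _ : Fin (j+1) => ℕ).tsum_eq, ENNReal.tsum_prod']
    have : ∀ (m : ℕ) (v : Fin j → ℕ),
        (∏ k, f (((Fin.consEquiv fun _ : Fin (j+1) => ℕ) (m, v)) k)) = f m * ∏ k, f (v k) := by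
      intro m v
      rw [Fin.prod_univ_succ]
      simp [Fin.consEquiv]
    simp_rw [this]
    rw [pow_succ]
    simp_rw [ENNReal.tsum_mul_left]
    rw [ENNReal.tsum_mul_right, ih]
    ring

noncomputable def atomwt (t a b r s : ℝ) (i : (j : ℕ) × (Fin j → ℕ)) : ℝ :=
  ((i.1.factorial : ℝ))⁻¹ * ∏ k, bet t a b r s (i.2 k)

noncomputable def atompt (t : ℝ) (i : (j : ℕ) × (Fin j → ℕ)) : ℝ :=
  t ^ (∑ k, (i.2 k + 1))

noncomputable def berger (t a b r s : ℝ) : Measure ℝ :=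
  Measure.sum (fun i : (j : ℕ) × (Fin j → ℕ) =>
    (ENNReal.ofReal (Real.exp (-(LL t a b r s 1)) * atomwt t a b r s i)) •
      Measure.dirac (atompt t i))

namespace GH
variable {t a b r s : ℝ} (h : GH t a b r s)
include h

lemma key_tsum {z : ℝ} (hz0 : 0 ≤ z) (hz1 : z ≤ 1) :
    ∑' i : (j : ℕ) × (Fin j → ℕ),
      ENNReal.ofReal (atomwt t a b r s i * z ^ (∑ k, (i.2 k + 1)))
      = ENNReal.ofReal (Real.exp (LL t a b r s z)) := by
  have hbz : ∀ m, 0 ≤ bet t a b r s m * z^(m+1) :=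
    fun m => mul_nonneg (h.bet_nonneg m) (pow_nonneg hz0 _)
  have hsum := h.summable_bet_mul hz0 hz1
  have hterm : ∀ i : (j : ℕ) × (Fin j → ℕ),
      ENNReal.ofReal (atomwt t a b r s i * z ^ (∑ k, (i.2 k + 1)))
        = ENNReal.ofReal ((i.1.factorial : ℝ))⁻¹ *
            ∏ k, ENNReal.ofReal (bet t a b r s (i.2 k) * z^(i.2 k + 1)) := by
    rintro ⟨j, v⟩
    rw [atomwt, ← Finset.prod_pow_eq_pow_sum, mul_assoc, ← Finset.prod_mul_distrib,
      ENNReal.ofReal_mul (by positivity),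
      ENNReal.ofReal_prod_of_nonneg (fun k _ => hbz (v k))]
  simp_rw [hterm]
  rw [ENNReal.tsum_sigma']
  simp_rw [ENNReal.tsum_mul_left, tsum_pow_aux (fun m => ENNReal.ofReal (bet t a b r s m * z^(m+1)))]
  rw [← ENNReal.ofReal_tsum_of_nonneg hbz hsum]
  rw [show (∑' m, bet t a b r s m * z^(m+1)) = LL t a b r s z from rfl]
  have hLz : 0 ≤ LL t a b r s z := h.LL_nonneg hz0
  have : ∀ j : ℕ, ENNReal.ofReal ((j.factorial : ℝ))⁻¹ * ENNReal.ofReal (LL t a b r s z) ^ j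
      = ENNReal.ofReal ((LL t a b r s z) ^ j / (Nat.factorial j)) := by
    intro j
    rw [← ENNReal.ofReal_pow hLz, ← ENNReal.ofReal_mul (by positivity), inv_mul_eq_div,
      div_eq_inv_mul]
  simp_rw [this]
  rw [← ENNReal.ofReal_tsum_of_nonneg (fun j => by positivity)
    (Real.summable_pow_div_factorial _), ← real_exp_tsum]

end GH

namespace GH
variable {t a b r s : ℝ} (h : GH t a b r s)
include h

lemma atomwt_nonneg (i : (j : ℕ) × (Fin j → ℕ)) : 0 ≤ atomwt t a b r s i :=
  mul_nonneg (by positivity) (Finset.prod_nonneg fun k _ => h.bet_nonneg _)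

lemma atompt_mem (i : (j : ℕ) × (Fin j → ℕ)) : atompt t i ∈ Set.Icc (0:ℝ) 1 :=
  ⟨(pow_pos h.ht0 _).le, pow_le_one₀ h.ht0.le h.ht1.le⟩

lemma berger_compl : berger t a b r s (Set.Icc (0:ℝ) 1)ᶜ = 0 := by
  rw [berger, Measure.sum_apply _ measurableSet_Icc.compl]
  have hd : ∀ i : (j:ℕ) × (Fin j → ℕ), Measure.dirac (atompt t i) (Set.Icc (0:ℝ) 1)ᶜ = 0 := by
    intro i
    rw [Measure.dirac_apply' _ measurableSet_Icc.compl,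
      Set.indicator_of_notMem (by simp [h.atompt_mem i])]
  simp [hd]

lemma berger_univ : berger t a b r s Set.univ = 1 := by
  rw [berger, Measure.sum_apply _ MeasurableSet.univ]
  simp only [Measure.smul_apply, measure_univ, smul_eq_mul, mul_one]
  have hrw : ∀ i : (j:ℕ) × (Fin j → ℕ),
      ENNReal.ofReal (Real.exp (-(LL t a b r s 1)) * atomwt t a b r s i)
      = ENNReal.ofReal (Real.exp (-(LL t a b r s 1))) *
          ENNReal.ofReal (atomwt t a b r s i * 1 ^ (∑ k, (i.2 k + 1))) := by
    intro i
    rw [one_pow, mul_one, ENNReal.ofReal_mul (Real.exp_nonneg _)]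
  simp_rw [hrw]
  rw [ENNReal.tsum_mul_left, h.key_tsum zero_le_one le_rfl,
    ← ENNReal.ofReal_mul (Real.exp_nonneg _), ← Real.exp_add]
  simp

lemma berger_moment (n : ℕ) :
    ∫ x, x ^ n ∂(berger t a b r s)
      = Real.exp (-(LL t a b r s 1)) * Real.exp (LL t a b r s (t^n)) := by
  have hnull : berger t a b r s {x : ℝ | ¬ (0:ℝ) ≤ x ^ n} = 0 := by
    apply measure_mono_null _ h.berger_compl
    intro x hx
    simp only [Set.mem_setOf_eq, not_le] at hx
    simp only [Set.mem_compl_iff, Set.mem_Icc, not_and_or, not_le]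
    left
    by_contra hx0
    push_neg at hx0
    exact absurd (pow_nonneg hx0 n) (not_le.2 hx)
  have hae : 0 ≤ᵐ[berger t a b r s] fun x : ℝ => x ^ n := by
    rw [Filter.EventuallyLE, ae_iff]
    simpa using hnull
  rw [integral_eq_lintegral_of_nonneg_ae hae (continuous_pow n).aestronglyMeasurable]
  have hmble : Measurable fun x : ℝ => ENNReal.ofReal (x ^ n) :=
    (measurable_id.pow_const n).ennreal_ofReal
  rw [berger, lintegral_sum_measure]
  simp_rw [lintegral_smul_measure, smul_eq_mul, lintegral_dirac' _ hmble]
  have hterm : ∀ i : (j:ℕ) × (Fin j → ℕ),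
      ENNReal.ofReal (Real.exp (-(LL t a b r s 1)) * atomwt t a b r s i) *
        ENNReal.ofReal (atompt t i ^ n)
      = ENNReal.ofReal (Real.exp (-(LL t a b r s 1))) *
          ENNReal.ofReal (atomwt t a b r s i * (t^n) ^ (∑ k, (i.2 k + 1))) := by
    intro i
    rw [ENNReal.ofReal_mul (Real.exp_nonneg _), mul_assoc,
      ← ENNReal.ofReal_mul (h.atomwt_nonneg i), atompt, pow_right_comm]
  simp_rw [hterm]
  rw [ENNReal.tsum_mul_left, h.key_tsum (pow_nonneg h.ht0.le n) (h.htpow1 n),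
    ← ENNReal.ofReal_mul (Real.exp_nonneg _), ENNReal.toReal_ofReal (by positivity)]

lemma main_subnormal : IsSubnormalWeight (fun n => Real.sqrt (WW t a b r n) ^ s) := by
  refine ⟨fun n => Real.rpow_pos_of_pos (Real.sqrt_pos.2 (h.WW_pos n)) s,
    ⟨1, fun n => Real.rpow_le_one (Real.sqrt_nonneg _)
      (Real.sqrt_le_one.2 (h.WW_le_one n)) h.hs.le⟩,
    berger t a b r s, ⟨by simp [h.berger_univ]⟩,
    ⟨Set.Icc 0 1, isCompact_Icc, fun x hx => hx.1, h.berger_compl⟩, ?_⟩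
  intro n
  rw [h.moments_eq n, h.berger_moment n, sub_eq_neg_add, Real.exp_add]

end GH


/-- Sector VIII, diagonal segment below; Section 6. -/
theorem sectorVIII_diagonal_below (p N D : ℝ) (hp : 1 < p)
    (hD1 : -1 < D) (hDN : D < N) (hN0 : N < 0) :
    ∀ q : ℝ, -1 - N < q → q < 0 → -1 < D + q →
      MIDSubord p N D (N + q) (D + q) := by
  intro q hq1 hq2 hq3 s hs
  have hp0 : (0:ℝ) < p := lt_trans one_pos hp
  have hGH : GH p⁻¹ (-N) (-D) (-q) s :=
    ⟨inv_pos.2 hp0, inv_lt_one_of_one_lt₀ hp, by linarith, by linarith, by linarith,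
      by linarith, hs⟩
  have hfun : (fun n => (grws p N D n / grws p (N+q) (D+q) n) ^ s)
      = fun n => Real.sqrt (WW p⁻¹ (-N) (-D) (-q) n) ^ s := by
    funext n
    congr 1
    have hP1 : (1:ℝ) ≤ p ^ n := one_le_pow₀ hp.le
    have h1 : (0:ℝ) < p ^ n + N := by linarith
    have h2 : (0:ℝ) < p ^ n + D := by linarith
    have h3 : (0:ℝ) < p ^ n + (N+q) := by linarith
    have h4 : (0:ℝ) < p ^ n + (D+q) := by linarith
    have hPn : (p:ℝ)^n ≠ 0 := by positivity
    have e1 : (1:ℝ) - -D * ((p:ℝ)^n)⁻¹ ≠ 0 := by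
      have e : (1:ℝ) - -D * ((p:ℝ)^n)⁻¹ = (p^n + D)/p^n := by field_simp; ring
      rw [e]; exact div_ne_zero h2.ne' hPn
    have e2 : (1:ℝ) - (-N + -q) * ((p:ℝ)^n)⁻¹ ≠ 0 := by
      have e : (1:ℝ) - (-N + -q) * ((p:ℝ)^n)⁻¹ = (p^n + (N+q))/p^n := by
        field_simp; ring
      rw [e]; exact div_ne_zero h3.ne' hPn
    have e3 := h2.ne'
    have e4 := h3.ne'
    have hWW : WW p⁻¹ (-N) (-D) (-q) n
        = ((p^n+N)*(p^n+(D+q))) / ((p^n+D)*(p^n+(N+q))) := by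
      rw [WW, inv_pow]
      rw [div_eq_div_iff (mul_ne_zero e1 e2) (mul_ne_zero e3 e4)]
      field_simp
      ring
    simp only [grws]
    rw [hWW, Real.sqrt_div (by positivity : (0:ℝ) ≤ (p^n+N)*(p^n+(D+q))),
      Real.sqrt_div h1.le, Real.sqrt_div h3.le, Real.sqrt_mul h1.le, Real.sqrt_mul h2.le]
    have e2 : Real.sqrt (p^n+D) ≠ 0 := Real.sqrt_ne_zero'.mpr h2
    have e3 : Real.sqrt (p^n+(N+q)) ≠ 0 := Real.sqrt_ne_zero'.mpr h3
    have e4 : Real.sqrt (p^n+(D+q)) ≠ 0 := Real.sqrt_ne_zero'.mpr h4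
    field_simp
  show IsSubnormalWeight (fun n => (grws p N D n / grws p (N+q) (D+q) n) ^ s)
  rw [hfun]
  exact hGH.main_subnormal
end

section
/- (Sector V subordination; Section 8.) Fix p > 1 and let (N,D) lie in Sector V, i.e., 0 < D < N < 1. Then (N,D) ≫ (−D,−N); equivalently, the quotient sequence, whose n-th square equals (p^{2n} − N²)/(p^{2n} − D²), is an MID weight sequence. -/
open MeasureTheory

lemma aux_alg (U V K X Y : ℝ) (hK : K ≠ 0) (hX : X ≠ 1) :
    (U - V) / (K * (1 - X)) * (Y - 1) = (V - U) / K * ((Y - 1) / (X - 1)) := by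
  have h1 : (1:ℝ) - X ≠ 0 := fun h => hX (by linarith [sub_eq_zero.mp h])
  have h2 : X - 1 ≠ 0 := sub_ne_zero.mpr hX
  field_simp
  ring

lemma real_exp_eq_tsum (x : ℝ) : Real.exp x = ∑' n : ℕ, x ^ n / (Nat.factorial n : ℝ) := by
  rw [Real.exp_eq_exp_ℝ, NormedSpace.exp_eq_tsum_div]

lemma ennreal_tsum_pi_fin (F : ℕ → ENNReal) (m : ℕ) :
    (∑' g : Fin m → ℕ, ∏ t, F (g t)) = (∑' k, F k) ^ m := by
  induction m with
  | zero =>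
      rw [pow_zero, tsum_eq_single (fun t => t.elim0)]
      · simp
      · intro b hb; exact absurd (Subsingleton.elim b _) hb
  | succ m ih =>
      rw [← (Fin.consEquiv (fun _ : Fin (m+1) => ℕ)).tsum_eq
        (fun g : Fin (m+1) → ℕ => ∏ t, F (g t))]
      have : ∀ (c : ℕ × (Fin m → ℕ)),
          (∏ t : Fin (m+1), F ((Fin.consEquiv (fun _ : Fin (m+1) => ℕ)) c t))
            = F c.1 * ∏ t, F (c.2 t) := by
        intro c
        simp [Fin.consEquiv, Fin.prod_univ_succ]
      simp only [this]
      rw [ENNReal.tsum_prod']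
      simp only [ENNReal.tsum_mul_left]
      rw [ih, ENNReal.tsum_mul_right, pow_succ, mul_comm]

set_option maxHeartbeats 2000000 in
/-- The core MID result for the sequence `n ↦ √((p^{2n}-N²)/(p^{2n}-D²))`. -/
theorem sectorV_core (p N D : ℝ) (hp : 1 < p)
    (hD0 : 0 < D) (hDN : D < N) (hN1 : N < 1) :
    IsMIDWeight (fun n => Real.sqrt ((p ^ (2 * n) - N ^ 2) / (p ^ (2 * n) - D ^ 2))) := by
  intro s hs
  have hp0 : (0:ℝ) < p := lt_trans one_pos hp
  set u : ℝ := N ^ 2 with hu_def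
  set v : ℝ := D ^ 2 with hv_def
  set q : ℝ := (p ^ 2)⁻¹ with hq_def
  have hN0 : 0 < N := lt_trans hD0 hDN
  have hv0 : 0 < v := pow_pos hD0 2
  have hvu : v < u := by
    apply pow_lt_pow_left₀ hDN hD0.le
    norm_num
  have hu0 : 0 < u := lt_trans hv0 hvu
  have hu1 : u < 1 := by
    calc u = N^2 := rfl
    _ < 1 := by nlinarith
  have hv1 : v < 1 := lt_trans hvu hu1
  have hq0 : 0 < q := by positivity
  have hq1 : q < 1 := by
    rw [hq_def, inv_lt_one_iff₀]
    right; nlinarith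
  -- powers of q
  have hqpow_le : ∀ k : ℕ, q ^ k ≤ 1 := fun k => pow_le_one₀ hq0.le hq1.le
  have hqpow_pos : ∀ k : ℕ, 0 < q ^ k := fun k => pow_pos hq0 k
  have hqpow_lt1 : ∀ k : ℕ, q ^ (k+1) < 1 := fun k => pow_lt_one₀ hq0.le hq1 k.succ_ne_zero
  -- the basic sequence
  set c : ℕ → ℝ := fun j => (1 - u * q ^ j) / (1 - v * q ^ j) with hc_def
  have hcu : ∀ j : ℕ, u * q ^ j < 1 := fun j =>
    lt_of_le_of_lt (by nlinarith [hqpow_le j, hqpow_pos j]) hu1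
  have hcv : ∀ j : ℕ, v * q ^ j < 1 := fun j =>
    lt_of_le_of_lt (by nlinarith [hqpow_le j, hqpow_pos j]) hv1
  have hc_pos : ∀ j, 0 < c j := by
    intro j
    apply div_pos <;> [skip; skip] <;> nlinarith [hcu j, hcv j]
  have hc_le1 : ∀ j, c j ≤ 1 := by
    intro j
    rw [div_le_one (by nlinarith [hcv j])]
    nlinarith [hqpow_pos j]
  -- rewriting the weight ratio
  have hc_eq : ∀ j : ℕ, (p ^ (2*j) - N ^ 2) / (p ^ (2*j) - D ^ 2) = c j := by
    intro j
    have hqp : q ^ j * p ^ (2*j) = 1 := by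
      rw [hq_def, pow_mul, inv_pow, inv_mul_cancel₀ (by positivity)]
    have h1 : 1 - u * q ^ j = q ^ j * (p ^ (2*j) - u) := by
      rw [mul_sub, mul_comm (q ^ j) (p^(2*j)), mul_comm (q ^ j)]
      rw [mul_comm (p^(2*j)) (q^j), hqp]
    have h2 : 1 - v * q ^ j = q ^ j * (p ^ (2*j) - v) := by
      rw [mul_sub, mul_comm (q ^ j) (p^(2*j)), mul_comm (q ^ j)]
      rw [mul_comm (p^(2*j)) (q^j), hqp]
    rw [hc_def]
    simp only [h1, h2]
    rw [mul_div_mul_left _ _ (ne_of_gt (hqpow_pos j))]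
  -- the coefficient sequence
  set a : ℕ → ℝ := fun k => (u^(k+1) - v^(k+1)) / ((k+1) * (1 - q^(k+1))) with ha_def
  have hden_pos : ∀ k : ℕ, (0:ℝ) < ((k:ℝ)+1) * (1 - q^(k+1)) := by
    intro k
    apply mul_pos (by positivity)
    linarith [hqpow_lt1 k]
  have ha_nonneg : ∀ k, 0 ≤ a k := by
    intro k
    apply div_nonneg _ (hden_pos k).le
    have := pow_le_pow_left₀ hv0.le hvu.le (k+1)
    linarith
  have ha_le : ∀ k, a k ≤ u ^ k * (u / (1-q)) := by
    intro k
    have h1 : u ^ k * (u / (1-q)) = u^(k+1) / (1 * (1 - q)) := by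
      rw [pow_succ, one_mul]; ring
    rw [h1, ha_def]
    apply div_le_div₀ (by positivity)
    · nlinarith [pow_pos hv0 (k+1)]
    · have hq' : (0:ℝ) < 1 - q := by linarith
      linarith
    · have h2 : q ^ (k+1) ≤ q := by
        calc q^(k+1) ≤ q^1 := pow_le_pow_of_le_one hq0.le hq1.le (by omega)
        _ = q := pow_one q
      have h3 : (1:ℝ) ≤ (k+1 : ℝ) := by
        have := k.cast_nonneg (α := ℝ); linarith
      nlinarith
  have hA : Summable a :=
    Summable.of_nonneg_of_le ha_nonneg ha_le
      (((summable_geometric_of_lt_one hu0.le hu1)).mul_right _)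
  set A : ℝ := ∑' k, a k with hA_def
  have hA_nonneg : 0 ≤ A := tsum_nonneg ha_nonneg
  -- log series for each c j
  have hlogc : ∀ j : ℕ, HasSum (fun k : ℕ =>
      ((v * q ^ j) ^ (k+1) - (u * q ^ j) ^ (k+1)) / (k+1)) (Real.log (c j)) := by
    intro j
    have h1 := Real.hasSum_pow_div_log_of_abs_lt_one
      (x := u * q ^ j) (by rw [abs_of_nonneg (by positivity)]; exact hcu j)
    have h2 := Real.hasSum_pow_div_log_of_abs_lt_one
      (x := v * q ^ j) (by rw [abs_of_nonneg (by positivity)]; exact hcv j)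
    have h3 := h2.sub h1
    have h4 : -Real.log (1 - v * q ^ j) - -Real.log (1 - u * q ^ j) = Real.log (c j) := by
      rw [hc_def]
      rw [Real.log_div (by nlinarith [hcu j]) (by nlinarith [hcv j])]
      ring
    rw [h4] at h3
    simpa only [sub_div] using h3
  -- summed over j < n
  have hlog_sum : ∀ n : ℕ, HasSum (fun k : ℕ => a k * ((q^(k+1))^n - 1))
      (∑ j ∈ Finset.range n, Real.log (c j)) := by
    intro n
    have h1 := hasSum_sum (fun j (_ : j ∈ Finset.range n) => hlogc j)
    have h2 : (fun k : ℕ => a k * ((q^(k+1))^n - 1)) = fun k : ℕ =>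
        ∑ j ∈ Finset.range n, ((v * q ^ j) ^ (k+1) - (u * q ^ j) ^ (k+1)) / (k+1) := by
      funext k
      have hq1k : q ^ (k+1) ≠ 1 := ne_of_lt (hqpow_lt1 k)
      have key : ∀ j ∈ Finset.range n, ((v * q ^ j) ^ (k+1) - (u * q ^ j) ^ (k+1)) / ((k:ℝ)+1)
          = ((v^(k+1) - u^(k+1)) / ((k:ℝ)+1)) * (q^(k+1))^j := by
        intro j _
        rw [mul_pow, mul_pow, ← pow_mul, ← pow_mul, Nat.mul_comm j (k+1), pow_mul, pow_mul]
        ring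
      push_cast
      rw [Finset.sum_congr rfl key, ← Finset.mul_sum, geom_sum_eq hq1k, ha_def]
      have hk1 : ((k:ℝ)+1) ≠ 0 := by positivity
      exact aux_alg _ _ _ _ _ hk1 hq1k
    rw [h2]
    exact h1
  -- the h sequence
  have hhn : ∀ n : ℕ, HasSum (fun k => a k * (q^(k+1))^n)
      ((∑ j ∈ Finset.range n, Real.log (c j)) + A) := by
    intro n
    have := (hlog_sum n).add hA.hasSum
    convert this using 2 with k
    ring
  set h : ℕ → ℝ := fun n => ∑' k, a k * (q^(k+1))^n with hh_def
  have hh_eq : ∀ n, h n = (∑ j ∈ Finset.range n, Real.log (c j)) + A :=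
    fun n => (hhn n).tsum_eq
  have hh_nonneg : ∀ n, 0 ≤ h n := fun n =>
    tsum_nonneg (fun k => mul_nonneg (ha_nonneg k) (by positivity))
  have hh_summable : ∀ n, Summable (fun k => a k * (q^(k+1))^n) :=
    fun n => (hhn n).summable
  set L : ℝ := Real.exp (-(s * A)) with hL_def
  have hL_pos : 0 < L := Real.exp_pos _
  -- the weight function
  set w : ℕ → ℝ := fun n => Real.sqrt ((p ^ (2 * n) - N ^ 2) / (p ^ (2 * n) - D ^ 2)) with hw_def
  have hw_eq : ∀ n, w n = Real.sqrt (c n) := by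
    intro n; rw [hw_def]; simp only []; rw [hc_eq n]
  -- moments formula
  have hM : ∀ n : ℕ, moments (fun n => w n ^ s) n = L * Real.exp (s * h n) := by
    intro n
    have step1 : ∀ j, ((w j) ^ s) ^ 2 = (c j) ^ s := by
      intro j
      have hwj : 0 ≤ w j := by rw [hw_eq j]; exact Real.sqrt_nonneg _
      have : ((w j) ^ s) ^ (2:ℕ) = (w j) ^ (s * 2) := by
        rw [← Real.rpow_natCast ((w j) ^ s) 2, ← Real.rpow_mul hwj]
        norm_num
      rw [this, mul_comm s 2, Real.rpow_mul hwj, Real.rpow_two, hw_eq j,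
        Real.sq_sqrt (hc_pos j).le]
    unfold moments
    simp only [step1]
    have step2 : ∀ j ∈ Finset.range n, (c j) ^ s = Real.exp (Real.log (c j) * s) :=
      fun j _ => Real.rpow_def_of_pos (hc_pos j) s
    rw [Finset.prod_congr rfl step2, ← Real.exp_sum, ← Finset.sum_mul]
    have : ∑ j ∈ Finset.range n, Real.log (c j) = h n - A := by
      rw [hh_eq n]; ring
    rw [this, hL_def, ← Real.exp_add]
    ring_nf
  -- index type, weights, atom locations
  have hwgt_nonneg : ∀ i : (Σ m : ℕ, (Fin m → ℕ)),
      0 ≤ L * (s ^ i.1 / (Nat.factorial i.1 : ℝ)) * ∏ t, a (i.2 t) := by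
    intro i
    apply mul_nonneg (mul_nonneg hL_pos.le (by positivity))
    exact Finset.prod_nonneg fun t _ => ha_nonneg _
  set wgt : (Σ m : ℕ, (Fin m → ℕ)) → ℝ :=
    fun i => L * (s ^ i.1 / (Nat.factorial i.1 : ℝ)) * ∏ t, a (i.2 t) with hwgt_def
  set pt : (Σ m : ℕ, (Fin m → ℕ)) → ℝ := fun i => ∏ t, q ^ (i.2 t + 1) with hpt_def
  have hpt_pos : ∀ i, 0 < pt i := fun i => Finset.prod_pos fun t _ => hqpow_pos _
  have hpt_le1 : ∀ i, pt i ≤ 1 :=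
    fun i => Finset.prod_le_one (fun t _ => (hqpow_pos _).le) (fun t _ => hqpow_le _)
  have hpt_mem : ∀ i, pt i ∈ Set.Icc (0:ℝ) 1 := fun i => ⟨(hpt_pos i).le, hpt_le1 i⟩
  -- the key tsum computation
  have key : ∀ n : ℕ, (∑' i : (Σ m : ℕ, (Fin m → ℕ)), ENNReal.ofReal (wgt i * pt i ^ n))
      = ENNReal.ofReal (L * Real.exp (s * h n)) := by
    intro n
    have hsplit : ∀ i : (Σ m : ℕ, (Fin m → ℕ)), ENNReal.ofReal (wgt i * pt i ^ n)
        = ENNReal.ofReal (L * (s ^ i.1 / (Nat.factorial i.1 : ℝ)))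
          * ∏ t, ENNReal.ofReal (a (i.2 t) * (q ^ (i.2 t + 1)) ^ n) := by
      intro i
      rw [← ENNReal.ofReal_prod_of_nonneg
          (fun t _ => mul_nonneg (ha_nonneg _) (by positivity)),
        ← ENNReal.ofReal_mul (mul_nonneg hL_pos.le (by positivity))]
      congr 1
      rw [Finset.prod_mul_distrib, hwgt_def, hpt_def]
      simp only []
      rw [← Finset.prod_pow]
      ring
    simp only [hsplit]
    rw [ENNReal.tsum_sigma']
    have hFsum : (∑' k : ℕ, ENNReal.ofReal (a k * (q ^ (k + 1)) ^ n))
        = ENNReal.ofReal (h n) := by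
      rw [hh_def]
      exact (ENNReal.ofReal_tsum_of_nonneg
        (fun k => mul_nonneg (ha_nonneg k) (by positivity)) (hh_summable n)).symm
    have hstep : ∀ m : ℕ,
        (∑' g : Fin m → ℕ, ENNReal.ofReal (L * (s ^ m / (Nat.factorial m : ℝ)))
          * ∏ t, ENNReal.ofReal (a (g t) * (q ^ (g t + 1)) ^ n))
        = ENNReal.ofReal L * ENNReal.ofReal ((s * h n) ^ m / (Nat.factorial m : ℝ)) := by
      intro m
      rw [ENNReal.tsum_mul_left, ennreal_tsum_pi_fin
        (fun k => ENNReal.ofReal (a k * (q ^ (k + 1)) ^ n)) m, hFsum]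
      rw [← ENNReal.ofReal_pow (hh_nonneg n),
        ← ENNReal.ofReal_mul (mul_nonneg hL_pos.le (by positivity)),
        show L * (s ^ m / (Nat.factorial m : ℝ)) * h n ^ m
          = L * ((s * h n) ^ m / (Nat.factorial m : ℝ)) by rw [mul_pow]; ring,
        ENNReal.ofReal_mul hL_pos.le]
    simp only [hstep]
    rw [ENNReal.tsum_mul_left, ← ENNReal.ofReal_tsum_of_nonneg
      (fun m => div_nonneg (pow_nonneg (mul_nonneg hs.le (hh_nonneg n)) m) (by positivity))
      (Real.summable_pow_div_factorial (s * h n)),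
      ← real_exp_eq_tsum, ← ENNReal.ofReal_mul hL_pos.le]
  -- the Berger measure
  set μ : Measure ℝ :=
    Measure.sum (fun i : (Σ m : ℕ, (Fin m → ℕ)) =>
      ENNReal.ofReal (wgt i) • Measure.dirac (pt i)) with hμ_def
  have hμ_apply : ∀ (S : Set ℝ), MeasurableSet S →
      μ S = ∑' i : (Σ m : ℕ, (Fin m → ℕ)),
        ENNReal.ofReal (wgt i) * S.indicator (1 : ℝ → ENNReal) (pt i) := by
    intro S hS
    rw [hμ_def, Measure.sum_apply _ hS]
    congr 1
    funext i
    rw [Measure.smul_apply, smul_eq_mul, Measure.dirac_apply]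
  have h01 : L * Real.exp (s * h 0) = 1 := by
    have h00 := (hM 0).symm
    unfold moments at h00
    simpa using h00
  have hμK : μ (Set.Icc (0:ℝ) 1)ᶜ = 0 := by
    rw [hμ_apply _ measurableSet_Icc.compl]
    have : ∀ i : (Σ m : ℕ, (Fin m → ℕ)),
        ENNReal.ofReal (wgt i)
          * (Set.Icc (0:ℝ) 1)ᶜ.indicator (1 : ℝ → ENNReal) (pt i) = 0 := by
      intro i
      rw [Set.indicator_of_notMem (by simpa using hpt_mem i), mul_zero]
    simp only [this, tsum_zero]
  have hμuniv : μ Set.univ = 1 := by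
    rw [hμ_apply _ MeasurableSet.univ]
    have : ∀ i : (Σ m : ℕ, (Fin m → ℕ)),
        ENNReal.ofReal (wgt i) * Set.univ.indicator (1 : ℝ → ENNReal) (pt i)
          = ENNReal.ofReal (wgt i * pt i ^ 0) := by
      intro i
      rw [Set.indicator_univ]
      simp
    simp only [this]
    rw [key 0, h01, ENNReal.ofReal_one]
  have hμfin : IsFiniteMeasure μ := ⟨by rw [hμuniv]; exact ENNReal.one_lt_top⟩
  -- a.e. membership in [0,1]
  have haeK : ∀ᵐ x ∂μ, x ∈ Set.Icc (0:ℝ) 1 := by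
    rw [ae_iff]
    have : {x : ℝ | ¬ x ∈ Set.Icc (0:ℝ) 1} = (Set.Icc (0:ℝ) 1)ᶜ := rfl
    rw [this]
    exact hμK
  -- the moment identity
  have hmom : ∀ n : ℕ, moments (fun n => w n ^ s) n = ∫ x, x ^ n ∂μ := by
    intro n
    have hae : 0 ≤ᵐ[μ] fun x : ℝ => x ^ n := by
      filter_upwards [haeK] with x hx
      exact pow_nonneg hx.1 n
    rw [hM n, integral_eq_lintegral_of_nonneg_ae hae
      (continuous_pow n).aestronglyMeasurable]
    have hlint : (∫⁻ x, ENNReal.ofReal (x ^ n) ∂μ)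
        = ENNReal.ofReal (L * Real.exp (s * h n)) := by
      rw [hμ_def, lintegral_sum_measure]
      have : ∀ i : (Σ m : ℕ, (Fin m → ℕ)),
          (∫⁻ x, ENNReal.ofReal (x ^ n)
            ∂(ENNReal.ofReal (wgt i) • Measure.dirac (pt i)))
          = ENNReal.ofReal (wgt i * pt i ^ n) := by
        intro i
        rw [lintegral_smul_measure, lintegral_dirac, smul_eq_mul,
          ← ENNReal.ofReal_mul (hwgt_nonneg i)]
      simp only [this]
      exact key n
    rw [hlint, ENNReal.toReal_ofReal (by positivity)]
  -- assemble
  refine ⟨?_, ⟨1, ?_⟩, μ, hμfin, ⟨Set.Icc 0 1, isCompact_Icc, fun x hx => hx.1, hμK⟩, hmom⟩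
  · intro n
    apply Real.rpow_pos_of_pos
    rw [hw_eq n]
    exact Real.sqrt_pos.mpr (hc_pos n)
  · intro n
    apply Real.rpow_le_one _ _ hs.le
    · rw [hw_eq n]; exact Real.sqrt_nonneg _
    · rw [hw_eq n]; exact Real.sqrt_le_one.mpr (hc_le1 n)

/-- Sector V subordination; Section 8: `(N,D) ≫ (−D,−N)`; equivalently
the sequence whose n-th square is `(p^{2n}−N²)/(p^{2n}−D²)` is an MID weight. -/
theorem sectorV_subord (p N D : ℝ) (hp : 1 < p)
    (hD0 : 0 < D) (hDN : D < N) (hN1 : N < 1) :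
    MIDSubord p N D (-D) (-N) ∧
      IsMIDWeight (fun n => Real.sqrt ((p ^ (2 * n) - N ^ 2) / (p ^ (2 * n) - D ^ 2))) := by
  have hcore := sectorV_core p N D hp hD0 hDN hN1
  have hN0 : 0 < N := lt_trans hD0 hDN
  refine ⟨?_, hcore⟩
  have hfun : (fun n => grws p N D n / grws p (-D) (-N) n)
      = fun n => Real.sqrt ((p ^ (2 * n) - N ^ 2) / (p ^ (2 * n) - D ^ 2)) := by
    funext n
    have hpn : (1:ℝ) ≤ p ^ n := one_le_pow₀ hp.le
    have h1 : (0:ℝ) < p ^ n + D := by linarith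
    have h2 : (0:ℝ) < p ^ n - N := by linarith
    have h3 : (0:ℝ) < p ^ n + N := by linarith
    have h4 : (0:ℝ) < p ^ n - D := by linarith
    have h3' : (0:ℝ) ≤ (p ^ n + N) / (p ^ n + D) := le_of_lt (div_pos h3 h1)
    rw [grws, grws, ← Real.sqrt_div h3']
    congr 1
    have hpow : p ^ (2 * n) = (p ^ n) ^ 2 := by
      rw [← pow_mul, Nat.mul_comm]
    rw [hpow]
    rw [div_div_div_eq, div_eq_div_iff (ne_of_gt (mul_pos h1 (by linarith)))
      (ne_of_gt (by nlinarith : (0:ℝ) < (p ^ n) ^ 2 - D ^ 2))]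
    ring
  unfold MIDSubord
  rw [hfun]
  exact hcore
end

section
/- (Sectors VI/VII subordination; Section 8.) Fix p > 1 and let (N,D) lie in the open square with −1 < D < 0 < N < 1 and D − N > −1. Then (N,D) ≫ (0, D − N). -/
open MeasureTheory

namespace SectorAux

/-- Hypotheses bundle. -/
structure Good (p N D : ℝ) : Prop where
  hp : 1 < p
  hD1 : -1 < D
  hD0 : D < 0
  hN0 : 0 < N
  hN1 : N < 1
  hDN : -1 < D - N

variable {p N D s : ℝ}

noncomputable def gfac (p N D : ℝ) (j : ℕ) : ℝ :=
  (1 + N * p⁻¹ ^ j) * (1 + (D - N) * p⁻¹ ^ j) / (1 + D * p⁻¹ ^ j)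

def dco (N D : ℝ) (k : ℕ) : ℝ := (-N) ^ k + (N - D) ^ k - (-D) ^ k

noncomputable def ulog (p N D : ℝ) (j : ℕ) : ℝ := - Real.log (gfac p N D j)

noncomputable def Rtail (p N D : ℝ) (n : ℕ) : ℝ := ∑' j, ulog p N D (j + n)

noncomputable def bco (p N D s : ℝ) (k : ℕ) : ℝ :=
  s * dco N D (k + 1) / (((k : ℝ) + 1) * (1 - p⁻¹ ^ (k + 1)))

section Basic

theorem hp0 (h : Good p N D) : 0 < p := lt_trans one_pos h.hp
theorem hq0 (h : Good p N D) : 0 < p⁻¹ := inv_pos.mpr (hp0 h)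
theorem hq1 (h : Good p N D) : p⁻¹ < 1 := inv_lt_one_of_one_lt₀ h.hp
theorem hqpow_pos (h : Good p N D) (j : ℕ) : 0 < p⁻¹ ^ j := pow_pos (hq0 h) j
theorem hqpow_le_one (h : Good p N D) (j : ℕ) : p⁻¹ ^ j ≤ 1 :=
  pow_le_one₀ (hq0 h).le (hq1 h).le

theorem fac1_pos (h : Good p N D) (j : ℕ) : 0 < 1 + N * p⁻¹ ^ j := by
  have := hqpow_pos h j
  nlinarith [h.hN0]

theorem fac2_pos (h : Good p N D) (j : ℕ) : 0 < 1 + (D - N) * p⁻¹ ^ j := by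
  have h1 := hqpow_pos h j
  have h2 := hqpow_le_one h j
  nlinarith [h.hDN, h.hD0, h.hN0]

theorem fac3_pos (h : Good p N D) (j : ℕ) : 0 < 1 + D * p⁻¹ ^ j := by
  have h1 := hqpow_pos h j
  have h2 := hqpow_le_one h j
  nlinarith [h.hD1, h.hD0]

theorem gfac_pos (h : Good p N D) (j : ℕ) : 0 < gfac p N D j :=
  div_pos (mul_pos (fac1_pos h j) (fac2_pos h j)) (fac3_pos h j)

theorem gfac_le_one (h : Good p N D) (j : ℕ) : gfac p N D j ≤ 1 := by
  rw [gfac, div_le_one (fac3_pos h j)]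
  have h1 := hqpow_pos h j
  have hneg : N * (D - N) ≤ 0 := by nlinarith [h.hN0, h.hD0]
  have key : N * (D - N) * (p⁻¹ ^ j * p⁻¹ ^ j) ≤ 0 :=
    mul_nonpos_of_nonpos_of_nonneg hneg (by positivity)
  nlinarith [key]

theorem ppow_pos (h : Good p N D) (n : ℕ) : 0 < p ^ n := pow_pos (hp0 h) n
theorem one_le_ppow (h : Good p N D) (n : ℕ) : 1 ≤ p ^ n := one_le_pow₀ h.hp.le

theorem wq_sq (h : Good p N D) (n : ℕ) :
    (grws p N D n / grws p 0 (D - N) n) ^ 2 = gfac p N D n := by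
  have hP := ppow_pos h n
  have h1 := one_le_ppow h n
  have hpnN : 0 < p ^ n + N := by nlinarith [h.hN0]
  have hpnD : 0 < p ^ n + D := by nlinarith [h.hD1]
  have hpnDN : 0 < p ^ n + (D - N) := by nlinarith [h.hDN]
  have hfrac1 : 0 ≤ (p ^ n + N) / (p ^ n + D) := le_of_lt (div_pos hpnN hpnD)
  have hfrac2 : 0 ≤ (p ^ n + 0) / (p ^ n + (D - N)) :=
    le_of_lt (div_pos (by linarith) hpnDN)
  rw [grws, grws, div_pow, Real.sq_sqrt hfrac1, Real.sq_sqrt hfrac2, gfac]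
  have hqn : p⁻¹ ^ n = (p ^ n)⁻¹ := inv_pow p n
  rw [hqn]
  have h3 : (1 + D * (p ^ n)⁻¹) ≠ 0 := by
    have : 1 + D * (p ^ n)⁻¹ = (p ^ n + D) / p ^ n := by field_simp
    rw [this]
    positivity
  field_simp
  ring

theorem wq_pos (h : Good p N D) (n : ℕ) : 0 < grws p N D n / grws p 0 (D - N) n := by
  have hP := ppow_pos h n
  have h1 := one_le_ppow h n
  have hpnN : 0 < p ^ n + N := by nlinarith [h.hN0]
  have hpnD : 0 < p ^ n + D := by nlinarith [h.hD1]
  have hpnDN : 0 < p ^ n + (D - N) := by nlinarith [h.hDN]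
  apply div_pos <;> rw [grws] <;> apply Real.sqrt_pos.mpr
  · exact div_pos hpnN hpnD
  · exact div_pos (by linarith) hpnDN

theorem wq_le_one (h : Good p N D) (n : ℕ) : grws p N D n / grws p 0 (D - N) n ≤ 1 := by
  have h1 := wq_pos h n
  have h2 : (grws p N D n / grws p 0 (D - N) n) ^ 2 ≤ 1 := by
    rw [wq_sq h n]; exact gfac_le_one h n
  nlinarith

end Basic

section Series

theorem hasSum_ulog (h : Good p N D) (j : ℕ) :
    HasSum (fun k : ℕ => dco N D (k + 1) * (p⁻¹ ^ j) ^ (k + 1) / ((k : ℝ) + 1))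
      (ulog p N D j) := by
  set x := p⁻¹ ^ j with hxdef
  have hx0 : 0 < x := hqpow_pos h j
  have hx1 : x ≤ 1 := hqpow_le_one h j
  have habs1 : |(-(N * x))| < 1 := by
    rw [abs_lt]; constructor <;> nlinarith [h.hN0, h.hN1]
  have habs2 : |((N - D) * x)| < 1 := by
    rw [abs_lt]; constructor <;> nlinarith [h.hDN, h.hD0, h.hN0]
  have habs3 : |(-(D * x))| < 1 := by
    rw [abs_lt]; constructor <;> nlinarith [h.hD1, h.hD0]
  have h1 := Real.hasSum_pow_div_log_of_abs_lt_one habs1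
  have h2 := Real.hasSum_pow_div_log_of_abs_lt_one habs2
  have h3 := Real.hasSum_pow_div_log_of_abs_lt_one habs3
  rw [sub_neg_eq_add] at h1 h3
  have e2 : 1 - (N - D) * x = 1 + (D - N) * x := by ring
  rw [e2] at h2
  have hsum := (h1.add h2).sub h3
  have hfun : (fun k : ℕ => (-(N * x)) ^ (k + 1) / ((k : ℝ) + 1) +
        ((N - D) * x) ^ (k + 1) / ((k : ℝ) + 1) - (-(D * x)) ^ (k + 1) / ((k : ℝ) + 1)) =
      fun k : ℕ => dco N D (k + 1) * x ^ (k + 1) / ((k : ℝ) + 1) := by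
    funext k
    have e1 : (-(N * x)) ^ (k + 1) = (-N) ^ (k + 1) * x ^ (k + 1) := by
      rw [← neg_mul, mul_pow]
    have e3 : (-(D * x)) ^ (k + 1) = (-D) ^ (k + 1) * x ^ (k + 1) := by
      rw [← neg_mul, mul_pow]
    rw [e1, e3, mul_pow, dco]
    ring
  rw [hfun] at hsum
  have hval : -Real.log (1 + N * x) + -Real.log (1 + (D - N) * x) - -Real.log (1 + D * x)
      = ulog p N D j := by
    rw [ulog, gfac, ← hxdef,
      Real.log_div (ne_of_gt (mul_pos (fac1_pos h j) (fac2_pos h j))) (ne_of_gt (fac3_pos h j)),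
      Real.log_mul (ne_of_gt (fac1_pos h j)) (ne_of_gt (fac2_pos h j))]
    ring
  rwa [hval] at hsum

theorem dco_succ_nonneg (h : Good p N D) (k : ℕ) : 0 ≤ dco N D (k + 1) := by
  rw [dco]
  have hND : N - D = N + -D := by ring
  rcases Nat.even_or_odd (k + 1) with he | ho
  · have e1 : (-N) ^ (k + 1) = N ^ (k + 1) := he.neg_pow N
    have e2 : (-D) ^ (k + 1) ≤ (N - D) ^ (k + 1) := by
      apply pow_le_pow_left₀ (by linarith [h.hD0]) (by linarith [h.hN0])
    nlinarith [pow_nonneg h.hN0.le (k + 1)]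
  · have e1 : (-N) ^ (k + 1) = -(N ^ (k + 1)) := ho.neg_pow N
    have e2 : N ^ (k + 1) + (-D) ^ (k + 1) ≤ (N + -D) ^ (k + 1) :=
      pow_add_pow_le h.hN0.le (by linarith [h.hD0]) (Nat.succ_ne_zero k)
    rw [← hND] at e2
    linarith

theorem dco_le (h : Good p N D) (k : ℕ) : dco N D k ≤ 3 * (N - D) ^ k := by
  have hND0 : (0:ℝ) ≤ N - D := by linarith [h.hN0, h.hD0]
  have b1 : (-N) ^ k ≤ (N - D) ^ k := by
    calc (-N) ^ k ≤ |(-N) ^ k| := le_abs_self _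
    _ = N ^ k := by rw [abs_pow, abs_neg, abs_of_pos h.hN0]
    _ ≤ (N - D) ^ k := pow_le_pow_left₀ h.hN0.le (by linarith [h.hD0]) k
  have b2 : (0:ℝ) ≤ (-D) ^ k := pow_nonneg (by linarith [h.hD0]) k
  have b3 : (0:ℝ) ≤ (N - D) ^ k := pow_nonneg hND0 k
  rw [dco]; linarith

theorem ulog_nonneg (h : Good p N D) (j : ℕ) : 0 ≤ ulog p N D j := by
  rw [ulog, neg_nonneg]
  exact Real.log_nonpos (gfac_pos h j).le (gfac_le_one h j)

theorem hND1 (h : Good p N D) : N - D < 1 := by linarith [h.hDN]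
theorem hND0' (h : Good p N D) : 0 < N - D := by linarith [h.hN0, h.hD0]

theorem ulog_le (h : Good p N D) (j : ℕ) :
    ulog p N D j ≤ 3 * (N - D) / (1 - (N - D)) * p⁻¹ ^ j := by
  have hρ0 := hND0' h
  have hρ1 := hND1 h
  have hx0 : 0 < p⁻¹ ^ j := hqpow_pos h j
  have hx1 : p⁻¹ ^ j ≤ 1 := hqpow_le_one h j
  have hgeo : HasSum (fun k : ℕ => 3 * (N - D) ^ (k + 1) * p⁻¹ ^ j)
      (3 * (N - D) / (1 - (N - D)) * p⁻¹ ^ j) := by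
    have hg := hasSum_geometric_of_lt_one hρ0.le hρ1
    have := hg.mul_left (3 * (N - D) * p⁻¹ ^ j)
    have hfun : (fun k : ℕ => 3 * (N - D) * p⁻¹ ^ j * (N - D) ^ k) =
        fun k : ℕ => 3 * (N - D) ^ (k + 1) * p⁻¹ ^ j := by
      funext k; ring
    rw [hfun] at this
    convert this using 1
    · rfl
    ring
  refine hasSum_le ?_ (hasSum_ulog h j) hgeo
  intro k
  have hd0 := dco_succ_nonneg h k
  have hdle := dco_le h (k + 1)
  have hpw : (p⁻¹ ^ j) ^ (k + 1) ≤ p⁻¹ ^ j := by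
    calc (p⁻¹ ^ j) ^ (k + 1) ≤ (p⁻¹ ^ j) ^ 1 :=
      pow_le_pow_of_le_one hx0.le hx1 (by omega)
    _ = p⁻¹ ^ j := pow_one _
  have hk1 : (1:ℝ) ≤ (k : ℝ) + 1 := by have : (0:ℝ) ≤ (k:ℝ) := Nat.cast_nonneg k; linarith
  calc dco N D (k + 1) * (p⁻¹ ^ j) ^ (k + 1) / ((k : ℝ) + 1)
      ≤ dco N D (k + 1) * (p⁻¹ ^ j) ^ (k + 1) :=
        div_le_self (mul_nonneg hd0 (by positivity)) hk1
    _ ≤ 3 * (N - D) ^ (k + 1) * p⁻¹ ^ j := by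
        have h1 : dco N D (k + 1) * (p⁻¹ ^ j) ^ (k + 1) ≤ 3 * (N - D) ^ (k + 1) * (p⁻¹ ^ j) ^ (k + 1) := by
          apply mul_le_mul_of_nonneg_right hdle (by positivity)
        have h2 : 3 * (N - D) ^ (k + 1) * (p⁻¹ ^ j) ^ (k + 1) ≤ 3 * (N - D) ^ (k + 1) * p⁻¹ ^ j := by
          apply mul_le_mul_of_nonneg_left hpw (by positivity)
        linarith

theorem summable_ulog (h : Good p N D) : Summable (ulog p N D) := by
  apply Summable.of_nonneg_of_le (ulog_nonneg h) (ulog_le h)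
  exact ((summable_geometric_of_lt_one (hq0 h).le (hq1 h)).mul_left _)

end Series

end SectorAux

namespace SectorAux

variable {p N D s : ℝ}

section Moments

theorem summable_ulog_tail (h : Good p N D) (n : ℕ) :
    Summable fun j => ulog p N D (j + n) :=
  (summable_nat_add_iff n).mpr (summable_ulog h)

theorem Rtail_nonneg (h : Good p N D) (n : ℕ) : 0 ≤ Rtail p N D n :=
  tsum_nonneg fun j => ulog_nonneg h _

theorem moments_eq (h : Good p N D) (hs : 0 < s) (n : ℕ) :
    moments (fun m => (grws p N D m / grws p 0 (D - N) m) ^ s) n =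
      Real.exp (-(s * Rtail p N D 0)) * Real.exp (s * Rtail p N D n) := by
  have hfac : ∀ j : ℕ, ((grws p N D j / grws p 0 (D - N) j) ^ s) ^ 2 =
      Real.exp (s * Real.log (gfac p N D j)) := by
    intro j
    have hw := wq_pos h j
    rw [Real.rpow_def_of_pos hw, sq, ← Real.exp_add, ← wq_sq h j, sq,
      Real.log_mul hw.ne' hw.ne']
    ring_nf
  have : moments (fun m => (grws p N D m / grws p 0 (D - N) m) ^ s) n =
      ∏ j ∈ Finset.range n, Real.exp (s * Real.log (gfac p N D j)) := by
    rw [moments]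
    exact Finset.prod_congr rfl fun j _ => hfac j
  rw [this, ← Real.exp_sum]
  have hsplit : ∑ j ∈ Finset.range n, ulog p N D j + Rtail p N D n = Rtail p N D 0 := by
    have := Summable.sum_add_tsum_nat_add (f := ulog p N D) n (summable_ulog h)
    rw [Rtail, Rtail]
    simpa using this
  have hlog : ∑ j ∈ Finset.range n, s * Real.log (gfac p N D j) =
      -(s * ∑ j ∈ Finset.range n, ulog p N D j) := by
    rw [Finset.mul_sum, ← Finset.sum_neg_distrib]
    exact Finset.sum_congr rfl fun j _ => by rw [ulog]; ring
  rw [hlog, ← Real.exp_add]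
  congr 1
  have : ∑ j ∈ Finset.range n, ulog p N D j = Rtail p N D 0 - Rtail p N D n := by
    linarith [hsplit]
  rw [this]
  ring

end Moments

end SectorAux

namespace SectorAux

open ENNReal

variable {p N D s : ℝ}

section ENN

/-- Key geometric-series / Fubini computation. -/
theorem tsum_bco (h : Good p N D) (hs : 0 < s) (n : ℕ) :
    ∑' k : ℕ, ENNReal.ofReal (bco p N D s k * (p⁻¹ ^ (k + 1)) ^ n) =
      ENNReal.ofReal (s * Rtail p N D n) := by
  have hq0' := hq0 h
  have hq1' := hq1 h
  -- RHS expansion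
  have step1 : ENNReal.ofReal (s * Rtail p N D n) =
      ∑' j : ℕ, ENNReal.ofReal (s * ulog p N D (j + n)) := by
    rw [Rtail, ← tsum_mul_left]
    exact ENNReal.ofReal_tsum_of_nonneg
      (fun j => mul_nonneg hs.le (ulog_nonneg h _))
      ((summable_ulog_tail h n).mul_left s)
  have step2 : ∀ j : ℕ, ENNReal.ofReal (s * ulog p N D (j + n)) =
      ∑' k : ℕ, ENNReal.ofReal
        (s * (dco N D (k + 1) * (p⁻¹ ^ (j + n)) ^ (k + 1) / ((k : ℝ) + 1))) := by
    intro j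
    have h2 := (hasSum_ulog h (j + n)).mul_left s
    rw [← h2.tsum_eq]
    refine ENNReal.ofReal_tsum_of_nonneg (fun k => ?_) h2.summable
    have := dco_succ_nonneg h k
    positivity
  have step4 : ∀ k : ℕ, (∑' j : ℕ, ENNReal.ofReal
        (s * (dco N D (k + 1) * (p⁻¹ ^ (j + n)) ^ (k + 1) / ((k : ℝ) + 1)))) =
      ENNReal.ofReal (bco p N D s k * (p⁻¹ ^ (k + 1)) ^ n) := by
    intro k
    have hd0 := dco_succ_nonneg h k
    set c : ℝ := s * dco N D (k + 1) * (p⁻¹ ^ (k + 1)) ^ n / ((k : ℝ) + 1) with hc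
    set r : ℝ := p⁻¹ ^ (k + 1) with hr
    have hr0 : 0 < r := pow_pos hq0' _
    have hr1 : r < 1 := by
      calc r = p⁻¹ ^ (k+1) := hr
      _ ≤ p⁻¹ ^ 1 := pow_le_pow_of_le_one hq0'.le hq1'.le (by omega)
      _ = p⁻¹ := pow_one _
      _ < 1 := hq1'
    have hc0 : 0 ≤ c := by
      have : (0:ℝ) ≤ (p⁻¹ ^ (k + 1)) ^ n := by positivity
      rw [hc]; positivity
    have hterm : ∀ j : ℕ,
        s * (dco N D (k + 1) * (p⁻¹ ^ (j + n)) ^ (k + 1) / ((k : ℝ) + 1)) = c * r ^ j := by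
      intro j
      have e : (j + n) * (k + 1) = (k + 1) * j + (k + 1) * n := by ring
      have : (p⁻¹ ^ (j + n)) ^ (k + 1) = (p⁻¹ ^ (k + 1)) ^ j * (p⁻¹ ^ (k + 1)) ^ n := by
        rw [← pow_mul, e, pow_add, pow_mul, pow_mul]
      rw [this, hc, hr]
      ring
    have hgeo : (∑' j : ℕ, ENNReal.ofReal (c * r ^ j)) =
        ENNReal.ofReal c * (1 - ENNReal.ofReal r)⁻¹ := by
      have : ∀ j : ℕ, ENNReal.ofReal (c * r ^ j) =
          ENNReal.ofReal c * (ENNReal.ofReal r) ^ j := by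
        intro j
        rw [ENNReal.ofReal_mul hc0, ENNReal.ofReal_pow hr0.le]
      simp_rw [this]
      rw [ENNReal.tsum_mul_left, ENNReal.tsum_geometric]
    have hsub : (1 : ℝ≥0∞) - ENNReal.ofReal r = ENNReal.ofReal (1 - r) := by
      rw [ENNReal.ofReal_sub 1 hr0.le, ENNReal.ofReal_one]
    calc (∑' j : ℕ, ENNReal.ofReal
          (s * (dco N D (k + 1) * (p⁻¹ ^ (j + n)) ^ (k + 1) / ((k : ℝ) + 1))))
        = ∑' j : ℕ, ENNReal.ofReal (c * r ^ j) := by simp_rw [hterm]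
      _ = ENNReal.ofReal c * (1 - ENNReal.ofReal r)⁻¹ := hgeo
      _ = ENNReal.ofReal c * ENNReal.ofReal (1 - r)⁻¹ := by
          rw [hsub, ENNReal.ofReal_inv_of_pos (by linarith)]
      _ = ENNReal.ofReal (c * (1 - r)⁻¹) := by rw [← ENNReal.ofReal_mul hc0]
      _ = ENNReal.ofReal (bco p N D s k * (p⁻¹ ^ (k + 1)) ^ n) := by
          congr 1
          rw [hc, hr, bco]
          have hk : ((k : ℝ) + 1) ≠ 0 := by positivity
          have hrr : (1 : ℝ) - p⁻¹ ^ (k + 1) ≠ 0 := by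
            rw [hr] at hr1; intro hcon; nlinarith
          field_simp
  rw [step1]
  simp_rw [step2]
  rw [ENNReal.tsum_comm]
  simp_rw [step4]

/-- Sum over tuples of a product = power of sum, in `ℝ≥0∞`. -/
theorem tsum_pi (c : ℕ → ℝ≥0∞) :
    ∀ i : ℕ, (∑' v : Fin i → ℕ, ∏ j, c (v j)) = (∑' k, c k) ^ i := by
  intro i
  induction i with
  | zero =>
      rw [tsum_eq_single (fun j => j.elim0) (fun b hb => absurd (Subsingleton.elim b _) hb)]
      simp
  | succ i ih =>
      let e : ℕ × (Fin i → ℕ) ≃ (Fin (i + 1) → ℕ) := Fin.consEquiv (fun _ : Fin (i + 1) => ℕ)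
      rw [← Equiv.tsum_eq e (fun v : Fin (i + 1) → ℕ => ∏ j, c (v j))]
      have happ : ∀ x : ℕ × (Fin i → ℕ),
          (∏ j, c ((e x) j)) = c x.1 * ∏ j : Fin i, c (x.2 j) := by
        intro x
        rw [Fin.prod_univ_succ]
        congr 1
      calc (∑' x : ℕ × (Fin i → ℕ), ∏ j, c ((e x) j))
          = ∑' x : ℕ × (Fin i → ℕ), c x.1 * ∏ j : Fin i, c (x.2 j) := by simp_rw [happ]
        _ = ∑' a : ℕ, ∑' v : Fin i → ℕ, c a * ∏ j : Fin i, c (v j) := ENNReal.tsum_prod'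
        _ = ∑' a : ℕ, c a * ∑' v : Fin i → ℕ, ∏ j : Fin i, c (v j) := by
            simp_rw [ENNReal.tsum_mul_left]
        _ = ∑' a : ℕ, c a * (∑' k, c k) ^ i := by simp_rw [ih]
        _ = (∑' k, c k) * (∑' k, c k) ^ i := by rw [ENNReal.tsum_mul_right]
        _ = (∑' k, c k) ^ (i + 1) := by rw [pow_succ]; ring
  
/-- Exponential series in `ℝ≥0∞`. -/
theorem tsum_ofReal_exp {x : ℝ} (hx : 0 ≤ x) :
    (∑' i : ℕ, ENNReal.ofReal x ^ i / (Nat.factorial i : ℝ≥0∞)) =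
      ENNReal.ofReal (Real.exp x) := by
  have hexp : Real.exp x = ∑' i : ℕ, x ^ i / (Nat.factorial i : ℝ) := by
    rw [Real.exp_eq_exp_ℝ, NormedSpace.exp_eq_tsum_div]
  rw [hexp, ENNReal.ofReal_tsum_of_nonneg (fun i => by positivity)
    (Real.summable_pow_div_factorial x)]
  refine tsum_congr fun i => ?_
  rw [ENNReal.ofReal_div_of_pos (by positivity), ENNReal.ofReal_pow hx,
    ENNReal.ofReal_natCast]

end ENN

end SectorAux

namespace SectorAux

open ENNReal

variable {p N D s : ℝ}

/-- Countable index type for the atoms. -/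
abbrev Idx : Type := Σ i : ℕ, Fin i → ℕ

noncomputable def watom (p N D s : ℝ) (σ : Idx) : ℝ≥0∞ :=
  ENNReal.ofReal (Real.exp (-(s * Rtail p N D 0))) *
    (∏ j, ENNReal.ofReal (bco p N D s (σ.2 j))) / (Nat.factorial σ.1 : ℝ≥0∞)

noncomputable def xatom (p : ℝ) (σ : Idx) : ℝ := p⁻¹ ^ (∑ j, (σ.2 j + 1))

noncomputable def bmeas (p N D s : ℝ) : Measure ℝ :=
  Measure.sum fun σ : Idx => watom p N D s σ • Measure.dirac (xatom p σ)

theorem bco_nonneg (h : Good p N D) (hs : 0 < s) (k : ℕ) : 0 ≤ bco p N D s k := by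
  have hd := dco_succ_nonneg h k
  have hr1 : p⁻¹ ^ (k + 1) < 1 := by
    calc p⁻¹ ^ (k + 1) ≤ p⁻¹ ^ 1 := pow_le_pow_of_le_one (hq0 h).le (hq1 h).le (by omega)
    _ = p⁻¹ := pow_one _
    _ < 1 := hq1 h
  rw [bco]
  have hk : (0:ℝ) < (k : ℝ) + 1 := by positivity
  apply div_nonneg (mul_nonneg hs.le hd)
  apply mul_nonneg hk.le
  linarith

theorem watom_ne_top (σ : Idx) : watom p N D s σ ≠ ⊤ := by
  rw [watom]
  apply (ENNReal.div_lt_top ?_ ?_).ne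
  · exact (ENNReal.mul_lt_top ENNReal.ofReal_lt_top
      (ENNReal.prod_lt_top fun j _ => ENNReal.ofReal_lt_top)).ne
  · exact Nat.cast_ne_zero.mpr (Nat.factorial_ne_zero σ.1)

theorem xatom_pos (h : Good p N D) (σ : Idx) : 0 < xatom p σ := pow_pos (hq0 h) _

theorem xatom_le_one (h : Good p N D) (σ : Idx) : xatom p σ ≤ 1 :=
  pow_le_one₀ (hq0 h).le (hq1 h).le

/-- Master moment identity. -/
theorem master (h : Good p N D) (hs : 0 < s) (n : ℕ) :
    (∑' σ : Idx, watom p N D s σ * ENNReal.ofReal (xatom p σ ^ n)) =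
      ENNReal.ofReal
        (moments (fun m => (grws p N D m / grws p 0 (D - N) m) ^ s) n) := by
  have hq0' := hq0 h
  rw [ENNReal.tsum_sigma']
  have hinner : ∀ (i : ℕ) (v : Fin i → ℕ),
      watom p N D s ⟨i, v⟩ * ENNReal.ofReal (xatom p ⟨i, v⟩ ^ n) =
        ENNReal.ofReal (Real.exp (-(s * Rtail p N D 0))) * (Nat.factorial i : ℝ≥0∞)⁻¹ *
          ∏ j, ENNReal.ofReal (bco p N D s (v j) * (p⁻¹ ^ (v j + 1)) ^ n) := by
    intro i v
    have hx : xatom p ⟨i, v⟩ ^ n = ∏ j : Fin i, (p⁻¹ ^ (v j + 1)) ^ n := by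
      rw [xatom]
      simp only
      rw [← pow_mul, Finset.sum_mul]
      rw [← Finset.prod_pow_eq_pow_sum]
      exact Finset.prod_congr rfl fun j _ => by rw [← pow_mul]
    rw [hx, ENNReal.ofReal_prod_of_nonneg (fun j _ => by positivity), watom]
    simp only
    rw [div_eq_mul_inv]
    have hcomb : (∏ j : Fin i, ENNReal.ofReal (bco p N D s (v j))) *
        ∏ j : Fin i, ENNReal.ofReal ((p⁻¹ ^ (v j + 1)) ^ n) =
        ∏ j : Fin i, ENNReal.ofReal (bco p N D s (v j) * (p⁻¹ ^ (v j + 1)) ^ n) := by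
      rw [← Finset.prod_mul_distrib]
      exact Finset.prod_congr rfl fun j _ => (ENNReal.ofReal_mul (bco_nonneg h hs _)).symm
    rw [← hcomb]
    ring
  simp_rw [hinner]
  have hv : ∀ i : ℕ, (∑' v : Fin i → ℕ,
      ENNReal.ofReal (Real.exp (-(s * Rtail p N D 0))) * (Nat.factorial i : ℝ≥0∞)⁻¹ *
        ∏ j, ENNReal.ofReal (bco p N D s (v j) * (p⁻¹ ^ (v j + 1)) ^ n)) =
      ENNReal.ofReal (Real.exp (-(s * Rtail p N D 0))) * (Nat.factorial i : ℝ≥0∞)⁻¹ *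
        ENNReal.ofReal (s * Rtail p N D n) ^ i := by
    intro i
    rw [ENNReal.tsum_mul_left]
    congr 1
    rw [tsum_pi (fun k => ENNReal.ofReal (bco p N D s k * (p⁻¹ ^ (k + 1)) ^ n)) i,
      tsum_bco h hs n]
  simp_rw [hv]
  have : ∀ i : ℕ, ENNReal.ofReal (Real.exp (-(s * Rtail p N D 0))) *
      (Nat.factorial i : ℝ≥0∞)⁻¹ * ENNReal.ofReal (s * Rtail p N D n) ^ i =
      ENNReal.ofReal (Real.exp (-(s * Rtail p N D 0))) *
        (ENNReal.ofReal (s * Rtail p N D n) ^ i / (Nat.factorial i : ℝ≥0∞)) := by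
    intro i
    rw [div_eq_mul_inv]
    ring
  simp_rw [this]
  rw [ENNReal.tsum_mul_left, tsum_ofReal_exp (mul_nonneg hs.le (Rtail_nonneg h n)),
    ← ENNReal.ofReal_mul (Real.exp_pos _).le, ← moments_eq h hs n]

end SectorAux

namespace SectorAux

open ENNReal

variable {p N D s : ℝ}

theorem tsum_watom (h : Good p N D) (hs : 0 < s) :
    (∑' σ : Idx, watom p N D s σ) = 1 := by
  have hm := master h hs 0
  simp only [pow_zero, ENNReal.ofReal_one, mul_one] at hm
  rw [hm, moments]
  simp

theorem bmeas_univ (h : Good p N D) (hs : 0 < s) :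
    bmeas p N D s Set.univ = 1 := by
  rw [bmeas, Measure.sum_apply _ MeasurableSet.univ]
  have : ∀ σ : Idx, (watom p N D s σ • Measure.dirac (xatom p σ)) Set.univ =
      watom p N D s σ := by
    intro σ
    rw [Measure.smul_apply, measure_univ, smul_eq_mul, mul_one]
  simp_rw [this]
  exact tsum_watom h hs

instance : Countable Idx := by infer_instance

theorem bmeas_isFinite (h : Good p N D) (hs : 0 < s) :
    IsFiniteMeasure (bmeas p N D s) :=
  ⟨by rw [bmeas_univ h hs]; exact one_lt_top⟩

theorem bmeas_compl (h : Good p N D) (hs : 0 < s) :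
    bmeas p N D s (Set.Icc (0:ℝ) 1)ᶜ = 0 := by
  rw [bmeas, Measure.sum_apply _ measurableSet_Icc.compl]
  have : ∀ σ : Idx, (watom p N D s σ • Measure.dirac (xatom p σ)) (Set.Icc (0:ℝ) 1)ᶜ = 0 := by
    intro σ
    rw [Measure.smul_apply, Measure.dirac_apply' _ measurableSet_Icc.compl,
      Set.indicator_of_notMem, smul_eq_mul, mul_zero]
    rw [Set.notMem_compl_iff]
    exact ⟨(xatom_pos h σ).le, xatom_le_one h σ⟩
  simp_rw [this]
  exact tsum_zero

theorem bmeas_integrable (h : Good p N D) (hs : 0 < s) (n : ℕ) :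
    Integrable (fun x : ℝ => x ^ n) (bmeas p N D s) := by
  constructor
  · exact (continuous_pow n).aestronglyMeasurable
  · rw [HasFiniteIntegral, bmeas, lintegral_sum_measure]
    have heval : ∀ σ : Idx,
        (∫⁻ a, (‖a ^ n‖₊ : ℝ≥0∞) ∂(watom p N D s σ • Measure.dirac (xatom p σ))) =
          watom p N D s σ * (‖xatom p σ ^ n‖₊ : ℝ≥0∞) := by
      intro σ
      rw [lintegral_smul_measure, lintegral_dirac, smul_eq_mul]
    simp_rw [enorm_eq_nnnorm, heval]
    have hbound : ∀ σ : Idx, watom p N D s σ * (‖xatom p σ ^ n‖₊ : ℝ≥0∞) ≤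
        watom p N D s σ := by
      intro σ
      have hx0 : (0:ℝ) ≤ xatom p σ ^ n := pow_nonneg (xatom_pos h σ).le n
      have hx1 : xatom p σ ^ n ≤ 1 := pow_le_one₀ (xatom_pos h σ).le (xatom_le_one h σ)
      calc watom p N D s σ * (‖xatom p σ ^ n‖₊ : ℝ≥0∞)
          ≤ watom p N D s σ * 1 := by
            apply mul_le_mul_right ?_ _
            rw [← enorm_eq_nnnorm, Real.enorm_eq_ofReal hx0]
            exact ENNReal.ofReal_le_one.mpr hx1
        _ = watom p N D s σ := mul_one _
    calc (∑' σ : Idx, watom p N D s σ * (‖xatom p σ ^ n‖₊ : ℝ≥0∞))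
        ≤ ∑' σ : Idx, watom p N D s σ := ENNReal.tsum_le_tsum hbound
      _ = 1 := tsum_watom h hs
      _ < ⊤ := one_lt_top

theorem bmeas_moment (h : Good p N D) (hs : 0 < s) (n : ℕ) :
    moments (fun m => (grws p N D m / grws p 0 (D - N) m) ^ s) n =
      ∫ x, x ^ n ∂(bmeas p N D s) := by
  rw [bmeas, integral_sum_measure (by rw [← bmeas]; exact bmeas_integrable h hs n)]
  have heval : ∀ σ : Idx,
      (∫ x, x ^ n ∂(watom p N D s σ • Measure.dirac (xatom p σ))) =
        (watom p N D s σ).toReal * xatom p σ ^ n := by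
    intro σ
    rw [integral_smul_measure, integral_dirac, smul_eq_mul]
  simp_rw [heval]
  have hterm : ∀ σ : Idx, (watom p N D s σ).toReal * xatom p σ ^ n =
      (watom p N D s σ * ENNReal.ofReal (xatom p σ ^ n)).toReal := by
    intro σ
    rw [ENNReal.toReal_mul, ENNReal.toReal_ofReal (pow_nonneg (xatom_pos h σ).le n)]
  simp_rw [hterm]
  rw [← ENNReal.tsum_toReal_eq
    (fun σ => ENNReal.mul_ne_top (watom_ne_top σ) ENNReal.ofReal_ne_top)]
  rw [master h hs n, ENNReal.toReal_ofReal]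
  rw [moments_eq h hs n]
  positivity

end SectorAux


/-- Sectors VI/VII subordination; Section 8: `(N,D) ≫ (0, D−N)`. -/
theorem sectorVI_VII_subord (p N D : ℝ) (hp : 1 < p)
    (hD1 : -1 < D) (hD0 : D < 0) (hN0 : 0 < N) (hN1 : N < 1)
    (hDN : -1 < D - N) :
    MIDSubord p N D 0 (D - N) := by
  intro s hs
  have h : SectorAux.Good p N D := ⟨hp, hD1, hD0, hN0, hN1, hDN⟩
  refine ⟨fun n => Real.rpow_pos_of_pos (SectorAux.wq_pos h n) s,
    ⟨1, fun n => Real.rpow_le_one (SectorAux.wq_pos h n).le (SectorAux.wq_le_one h n) hs.le⟩,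
    SectorAux.bmeas p N D s, SectorAux.bmeas_isFinite h hs,
    ⟨Set.Icc 0 1, isCompact_Icc, fun x hx => hx.1, SectorAux.bmeas_compl h hs⟩,
    fun n => SectorAux.bmeas_moment h hs n⟩
end

section
/- (Complete monotonicity claim for Sectors VI/VII; Section 8.) Fix p > 1 and let N, D be reals with −1 < D ≤ 0 and N(N − D) > 0. Then the function x ↦ N(N − D)/(p^x (p^x + D)) is completely monotone on (0,∞); consequently f(x) = 1 − N(N − D)/(p^x(p^x + D)) has completely monotone derivative, i.e., (−1)^n f^{(n+1)}(x) ≥ 0 for all n ≥ 0 and x > 0. -/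
open Real Set

/-- The cone of nonnegative combinations of `p^{-x} (p^x+D)^{-b}`. -/
inductive MyCone (p D : ℝ) : (ℝ → ℝ) → Prop
  | base (b : ℕ) : MyCone p D (fun x => (p ^ x)⁻¹ * ((p ^ x + D)⁻¹) ^ b)
  | smul (c : ℝ) (f : ℝ → ℝ) (hc : 0 ≤ c) (hf : MyCone p D f) :
      MyCone p D (fun x => c * f x)
  | add (f g : ℝ → ℝ) (hf : MyCone p D f) (hg : MyCone p D g) :
      MyCone p D (fun x => f x + g x)

section aux

variable {p D : ℝ}

lemma myPos (hp : 1 < p) (hD1 : -1 < D) : ∀ x : ℝ, 0 < x → 0 < p ^ x ∧ 0 < p ^ x + D := by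
  intro x hx
  have hp0 : (0:ℝ) < p := lt_trans one_pos hp
  have h1 : (1:ℝ) < p ^ x := Real.one_lt_rpow_iff_of_pos hp0 |>.2 (Or.inl ⟨hp, hx⟩)
  exact ⟨lt_trans one_pos h1, by linarith⟩

lemma myCone_nonneg (hp : 1 < p) (hD1 : -1 < D) {f : ℝ → ℝ} (hf : MyCone p D f) :
    ∀ x : ℝ, 0 < x → 0 ≤ f x := by
  induction hf with
  | base b =>
    intro x hx
    obtain ⟨h1, h2⟩ := myPos hp hD1 x hx
    positivity
  | smul c f hc hf ih => intro x hx; exact mul_nonneg hc (ih x hx)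
  | add f g hf hg ihf ihg => intro x hx; exact add_nonneg (ihf x hx) (ihg x hx)

lemma myCone_contDiffAt (hp : 1 < p) (hD1 : -1 < D) {f : ℝ → ℝ} (hf : MyCone p D f) :
    ∀ x : ℝ, 0 < x → ContDiffAt ℝ (⊤ : ℕ∞) f x := by
  have hp0 : (0:ℝ) < p := lt_trans one_pos hp
  have hrw : (fun x : ℝ => p ^ x) = fun x : ℝ => Real.exp (Real.log p * x) := by
    funext x; rw [Real.rpow_def_of_pos hp0, mul_comm]
  have hq : ContDiff ℝ (⊤ : ℕ∞) (fun x : ℝ => p ^ x) := by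
    rw [hrw]; exact Real.contDiff_exp.comp (contDiff_const.mul contDiff_id)
  induction hf with
  | base b =>
    intro x hx
    obtain ⟨h1, h2⟩ := myPos hp hD1 x hx
    exact ((hq.contDiffAt.inv h1.ne')).mul
      (((hq.contDiffAt.add contDiffAt_const).inv h2.ne').pow b)
  | smul c f hc hf ih => intro x hx; exact contDiffAt_const.mul (ih x hx)
  | add f g hf hg ihf ihg => intro x hx; exact (ihf x hx).add (ihg x hx)

lemma myCone_deriv (hp : 1 < p) (hD1 : -1 < D) (hD0 : D ≤ 0) {f : ℝ → ℝ} (hf : MyCone p D f) :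
    ∃ h : ℝ → ℝ, MyCone p D h ∧ ∀ x : ℝ, 0 < x → HasDerivAt f (-(h x)) x := by
  have hp0 : (0:ℝ) < p := lt_trans one_pos hp
  have hL : 0 < Real.log p := Real.log_pos hp
  induction hf with
  | base b =>
    set L := Real.log p with hLdef
    refine ⟨fun x => (L * (1 + (b:ℝ))) * ((p ^ x)⁻¹ * ((p ^ x + D)⁻¹) ^ b)
        + (L * (b:ℝ) * (-D)) * ((p ^ x)⁻¹ * ((p ^ x + D)⁻¹) ^ (b+1)), ?_, ?_⟩
    · exact MyCone.add _ _
        (MyCone.smul _ _ (by positivity) (MyCone.base b))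
        (MyCone.smul _ _ (mul_nonneg (mul_nonneg hL.le (Nat.cast_nonneg b)) (by linarith)) (MyCone.base (b+1)))
    · intro x hx
      obtain ⟨h1, h2⟩ := myPos hp hD1 x hx
      have hq : HasDerivAt (fun x : ℝ => p ^ x) (p ^ x * L) x :=
        (Real.hasStrictDerivAt_const_rpow hp0 x).hasDerivAt
      have hinv : HasDerivAt (fun x : ℝ => (p ^ x)⁻¹) (-(p ^ x * L) / (p ^ x) ^ 2) x :=
        hq.inv h1.ne'
      have hadd : HasDerivAt (fun x : ℝ => p ^ x + D) (p ^ x * L) x := hq.add_const D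
      have hpow : HasDerivAt (fun x : ℝ => ((p ^ x + D)⁻¹) ^ b)
          ((b : ℝ) * ((p ^ x + D)⁻¹) ^ (b - 1) * (-(p ^ x * L) / (p ^ x + D) ^ 2)) x :=
        (hadd.inv h2.ne').pow b
      have hmul := hinv.mul hpow
      refine HasDerivAt.congr_deriv hmul ?_
      rcases b with _ | k
      · simp only [Nat.cast_zero, pow_zero, zero_mul, mul_zero, mul_one, zero_add, neg_zero,
          mul_zero, add_zero, pow_one]
        field_simp
      · have hbk : (k + 1 : ℕ) - 1 = k := rfl
        rw [hbk]
        push_cast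
        simp only [inv_pow]
        field_simp
        ring
  | smul c f hc hf ih =>
    obtain ⟨h, hh, hd⟩ := ih
    exact ⟨fun x => c * h x, MyCone.smul c h hc hh, fun x hx => by
      simpa [mul_comm, neg_mul, mul_neg] using (hd x hx).const_mul c⟩
  | add f g hf hg ihf ihg =>
    obtain ⟨h1, hh1, hd1⟩ := ihf
    obtain ⟨h2, hh2, hd2⟩ := ihg
    exact ⟨fun x => h1 x + h2 x, MyCone.add _ _ hh1 hh2, fun x hx => by
      exact ((hd1 x hx).add (hd2 x hx)).congr_deriv (neg_add _ _).symm⟩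

lemma myCone_iteratedDeriv (hp : 1 < p) (hD1 : -1 < D) (hD0 : D ≤ 0) {f : ℝ → ℝ} (hf : MyCone p D f) (n : ℕ) :
    ∃ h : ℝ → ℝ, MyCone p D h ∧
      ∀ x : ℝ, 0 < x → iteratedDeriv n f x = (-1 : ℝ) ^ n * h x := by
  induction n with
  | zero => exact ⟨f, hf, fun x hx => by simp⟩
  | succ n ih =>
    obtain ⟨h, hh, heq⟩ := ih
    obtain ⟨h', hh', hd⟩ := myCone_deriv hp hD1 hD0 hh
    refine ⟨h', hh', fun x hx => ?_⟩
    rw [iteratedDeriv_succ]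
    have hev : iteratedDeriv n f =ᶠ[nhds x] fun y => (-1 : ℝ) ^ n * h y := by
      filter_upwards [IsOpen.mem_nhds isOpen_Ioi hx] with y hy
      exact heq y hy
    rw [hev.deriv_eq, deriv_const_mul_field, (hd x hx).deriv]
    ring

end aux

/-- complete monotonicity claim for Sectors VI/VII; Section 8. -/
theorem completelyMonotone_sectorVI_VII (p N D : ℝ) (hp : 1 < p)
    (hD1 : -1 < D) (hD0 : D ≤ 0) (hN : 0 < N * (N - D)) :
    CompletelyMonotoneOnPos
      (fun x : ℝ => N * (N - D) / (p ^ x * (p ^ x + D))) ∧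
    ∀ (n : ℕ) (x : ℝ), 0 < x →
      0 ≤ (-1 : ℝ) ^ n *
        iteratedDeriv (n + 1)
          (fun x : ℝ => 1 - N * (N - D) / (p ^ x * (p ^ x + D))) x := by
  set g : ℝ → ℝ := fun x : ℝ => N * (N - D) / (p ^ x * (p ^ x + D)) with hg
  have hgCone : MyCone p D g := by
    have : g = fun x => (N * (N - D)) * ((p ^ x)⁻¹ * ((p ^ x + D)⁻¹) ^ 1) := by
      funext x
      simp [hg, div_eq_mul_inv, mul_inv, pow_one, mul_comm]
    rw [this]
    exact MyCone.smul _ _ hN.le (MyCone.base 1)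
  have hCM : ∀ (n : ℕ) (x : ℝ), 0 < x → 0 ≤ (-1 : ℝ) ^ n * iteratedDeriv n g x := by
    intro n x hx
    obtain ⟨h, hh, heq⟩ := myCone_iteratedDeriv hp hD1 hD0 hgCone n
    rw [heq x hx, ← mul_assoc, ← pow_add, ← two_mul, pow_mul]
    simpa using myCone_nonneg hp hD1 hh x hx
  refine ⟨⟨fun x hx => (myCone_contDiffAt hp hD1 hgCone x hx).contDiffWithinAt, hCM⟩, ?_⟩
  intro n x hx
  have key : ∀ (m : ℕ) (x : ℝ), iteratedDeriv (m + 1) (fun x : ℝ => 1 - g x) x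
      = -iteratedDeriv (m + 1) g x := by
    intro m
    induction m with
    | zero => intro x; simp [iteratedDeriv_one, deriv_const_sub]
    | succ m ih =>
      intro x
      rw [iteratedDeriv_succ]
      have : deriv (iteratedDeriv (m + 1) fun x : ℝ => 1 - g x) x
          = deriv (fun y => -iteratedDeriv (m + 1) g y) x := by
        congr 1
        funext y
        exact ih y
      rw [this, deriv.fun_neg, ← iteratedDeriv_succ]
  have := hCM (n + 1) x hx
  rw [key n x]
  calc (0:ℝ) ≤ (-1) ^ (n+1) * iteratedDeriv (n+1) g x := this
    _ = (-1 : ℝ) ^ n * -iteratedDeriv (n + 1) g x := by ring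
end
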